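/- arXiv:2210.10408 — 11 statements merged into one kernel-verified Lean document; each statement's English description precedes it below -/
import Mathlib

section
/- Let k ≥ 2 be an integer and let G be a k-connected (K₂ ∪ kK₁)-free graph. If G is not 1-tough, then α(G) > |V(G)|/2. -/
open SimpleGraph

variable {V : Type*}

/-- The number of connected components after deleting the vertex set `S`. -/
noncomputable def omegaDel [Fintype V] (G : SimpleGraph V) (S : Finset V) : ℕ :=
  Nat.card ((G.induce ((S : Set V)ᶜ)).ConnectedComponent)

/-- `G` is `m`-connected. -/
def IsKConn [Fintype V] (G : SimpleGraph V) (m : ℕ) : Prop :=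
  m < Fintype.card V ∧ ∀ S : Finset V, S.card < m → (G.induce ((S : Set V)ᶜ)).Connected

/-- The independence number of `G`. -/
noncomputable def alphaNum [Fintype V] (G : SimpleGraph V) : ℕ :=
  sSup {n | ∃ s : Finset V, (∀ a ∈ s, ∀ b ∈ s, ¬ G.Adj a b) ∧ s.card = n}

/-- The minimum degree of `G`. -/
noncomputable def minDeg [Fintype V] (G : SimpleGraph V) : ℕ :=
  sInf {d | ∃ v : V, (G.neighborSet v).ncard = d}

/-- The graph `K₂ ∪ kK₁`. -/
def K2kK1 (k : ℕ) : SimpleGraph (Fin 2 ⊕ Fin k) :=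
  SimpleGraph.fromRel fun a b => a.isLeft ∧ b.isLeft

/-- `G` contains no induced copy of `H`. -/
def IndFree {W : Type*} (H : SimpleGraph W) (G : SimpleGraph V) : Prop :=
  IsEmpty (H ↪g G)

/-- `G` has a hamiltonian cycle. -/
def Ham [DecidableEq V] (G : SimpleGraph V) : Prop :=
  ∃ (a : V) (p : G.Walk a a), p.IsHamiltonianCycle

/-- `G` is hamiltonian-connected. -/
def HamConn [DecidableEq V] (G : SimpleGraph V) : Prop :=
  ∀ a b : V, a ≠ b → ∃ p : G.Walk a b, p.IsHamiltonian

/-- The Petersen graph. -/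
def petersen : SimpleGraph (ZMod 5 ⊕ ZMod 5) :=
  SimpleGraph.fromRel fun a b =>
    match a, b with
    | Sum.inl i, Sum.inl j => i = j + 1
    | Sum.inr i, Sum.inr j => i = j + 2
    | Sum.inl i, Sum.inr j => i = j
    | _, _ => False
lemma card_cc_of_edgeless {W : Type*} (H : SimpleGraph W) (h : ∀ a b, ¬ H.Adj a b) :
    Nat.card H.ConnectedComponent = Nat.card W := by
  refine (Nat.card_eq_of_bijective H.connectedComponentMk ⟨?_, ?_⟩).symm
  · intro a b hab
    obtain ⟨w⟩ := SimpleGraph.ConnectedComponent.exact hab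
    cases w with
    | nil => rfl
    | cons h' _ => exact absurd h' (h _ _)
  · exact SimpleGraph.ConnectedComponent.ind (fun v => ⟨v, rfl⟩)

lemma card_cc_connected {W : Type*} (H : SimpleGraph W) (h : H.Connected) :
    Nat.card H.ConnectedComponent = 1 := by
  rw [Nat.card_eq_one_iff_unique]
  refine ⟨⟨SimpleGraph.ConnectedComponent.ind₂ (fun a b =>
    SimpleGraph.ConnectedComponent.sound (h.preconnected a b))⟩, ?_⟩
  obtain ⟨v⟩ := h.nonempty
  exact ⟨H.connectedComponentMk v⟩

/-- A `k`-connected `(K₂ ∪ kK₁)`-free graph that is not 1-tough has `α(G) > |V(G)|/2`. -/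
theorem stmt_3 {V : Type*} [Fintype V] (k : ℕ) (hk : 2 ≤ k) (G : SimpleGraph V)
    (hconn : IsKConn G k) (hfree : IndFree (K2kK1 k) G)
    (hnt : ¬ ∀ S : Finset V, 2 ≤ omegaDel G S → omegaDel G S ≤ S.card) :
    (Fintype.card V : ℝ) / 2 < (alphaNum G : ℝ) := by
  classical
  push_neg at hnt
  obtain ⟨S, hω2, hωS⟩ := hnt
  have hωdef : omegaDel G S = Nat.card ((G.induce ((S : Set V)ᶜ)).ConnectedComponent) := rfl
  -- |S| ≥ k
  have hSk : k ≤ S.card := by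
    by_contra h
    push_neg at h
    have := card_cc_connected _ (hconn.2 S h)
    omega
  have hωk : k + 1 ≤ omegaDel G S := by omega
  -- the deleted graph is edgeless
  have hedgeless : ∀ a b : ((S : Set V)ᶜ : Set V), ¬ (G.induce ((S : Set V)ᶜ)).Adj a b := by
    by_contra h
    push_neg at h
    obtain ⟨u, v, huv⟩ := h
    have hGuv : G.Adj u v := huv
    set H := G.induce ((S : Set V)ᶜ) with hHdef
    set c₀ := H.connectedComponentMk u with hc₀
    have hvc₀ : H.connectedComponentMk v = c₀ := SimpleGraph.ConnectedComponent.sound huv.symm.reachable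
    haveI : Fintype H.ConnectedComponent := Fintype.ofFinite _
    haveI : Fintype {d : H.ConnectedComponent // d ≠ c₀} := Fintype.ofFinite _
    have hcard : k ≤ Fintype.card {d : H.ConnectedComponent // d ≠ c₀} := by
      have h1 : Fintype.card {d : H.ConnectedComponent // d ≠ c₀}
          = Fintype.card H.ConnectedComponent - 1 := by
        rw [Fintype.card_subtype_compl (p := fun d => d = c₀)]
        simp [Fintype.card_subtype_eq]
      have h2 : Nat.card H.ConnectedComponent = Fintype.card H.ConnectedComponent :=
        Nat.card_eq_fintype_card
      rw [hωdef] at hωk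
      omega
    obtain ⟨e⟩ : Nonempty (Fin k ↪ {d : H.ConnectedComponent // d ≠ c₀}) :=
      Function.Embedding.nonempty_of_card_le (by simpa using hcard)
    choose rep hrep using fun d : H.ConnectedComponent => d.exists_rep
    set w : Fin k → ((S : Set V)ᶜ : Set V) := fun i => rep (e i).1 with hw
    have hwmk : ∀ i, H.connectedComponentMk (w i) = (e i).1 := fun i => hrep _
    have hnadj : ∀ x y : ((S : Set V)ᶜ : Set V),
        H.connectedComponentMk x ≠ H.connectedComponentMk y → ¬ G.Adj x y := by
      intro x y hne hxy
      exact hne (SimpleGraph.ConnectedComponent.sound (SimpleGraph.Adj.reachable (hHdef ▸ hxy : H.Adj x y)))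
    set g : Fin 2 → ((S : Set V)ᶜ : Set V) := ![u, v] with hg
    have hgc : ∀ i, H.connectedComponentMk (g i) = c₀ := by
      intro i
      fin_cases i
      · exact hc₀.symm
      · exact hvc₀
    have hgadj : ∀ i j : Fin 2, i ≠ j → G.Adj (g i) (g j) := by
      intro i j hij
      fin_cases i <;> fin_cases j
      · exact absurd rfl hij
      · exact hGuv
      · exact hGuv.symm
      · exact absurd rfl hij
    have hginj : ∀ i j : Fin 2, (g i : V) = (g j : V) → i = j := by
      intro i j hij
      fin_cases i <;> fin_cases j
      · rfl
      · exact absurd hij hGuv.ne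
      · exact absurd hij hGuv.ne.symm
      · rfl
    have hmkne : ∀ (i : Fin 2) (j : Fin k),
        H.connectedComponentMk (g i) ≠ H.connectedComponentMk (w j) := by
      intro i j h'
      rw [hgc i, hwmk j] at h'
      exact (e j).2 h'.symm
    have hwinj : ∀ i j : Fin k, (w i : V) = (w j : V) → i = j := by
      intro i j h'
      have : (e i).1 = (e j).1 := by
        rw [← hwmk i, ← hwmk j, Subtype.ext h']
      exact e.injective (Subtype.ext this)
    set f : Fin 2 ⊕ Fin k → V := Sum.elim (fun i => (g i : V)) (fun i => (w i : V)) with hf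
    have hfinj : Function.Injective f := by
      rintro (i | i) (j | j) hij <;> simp only [hf, Sum.elim_inl, Sum.elim_inr] at hij
      · exact congrArg Sum.inl (hginj i j hij)
      · exact absurd (congrArg H.connectedComponentMk (Subtype.ext hij)) (hmkne i j)
      · exact absurd (congrArg H.connectedComponentMk (Subtype.ext hij.symm)) (hmkne j i)
      · exact congrArg Sum.inr (hwinj i j hij)
    have hK : ∀ a b : Fin 2 ⊕ Fin k, (K2kK1 k).Adj a b ↔ a ≠ b ∧ a.isLeft ∧ b.isLeft := by
      intro a b
      simp only [K2kK1, SimpleGraph.fromRel_adj]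
      tauto
    have hmap : ∀ a b, G.Adj (f a) (f b) ↔ (K2kK1 k).Adj a b := by
      rintro (i | i) (j | j) <;>
        simp only [hf, Sum.elim_inl, Sum.elim_inr] <;> rw [hK]
      · constructor
        · intro h'
          refine ⟨fun hij => ?_, rfl, rfl⟩
          have : i = j := by injection hij
          exact G.irrefl (this ▸ h')
        · rintro ⟨hne, -⟩
          exact hgadj i j (fun h' => hne (by rw [h']))
      · exact iff_of_false (hnadj (g i) (w j) (hmkne i j)) (by simp)
      · exact iff_of_false (hnadj (w i) (g j) (fun h' => hmkne j i h'.symm)) (by simp)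
      · refine iff_of_false (fun h' => ?_) (by simp)
        by_cases hij : i = j
        · exact G.irrefl (hij ▸ h')
        · refine hnadj (w i) (w j) (fun h2 => hij ?_) h'
          exact e.injective (Subtype.ext (by rw [← hwmk i, ← hwmk j]; exact h2))
    exact hfree.false ⟨⟨f, hfinj⟩, fun {a b} => hmap a b⟩
  -- counting
  have hcount : omegaDel G S = Fintype.card V - S.card := by
    rw [hωdef, card_cc_of_edgeless _ hedgeless, ← Finset.coe_compl, Nat.card_coe_set_eq,
      Set.ncard_coe_finset, Finset.card_compl]
  have hind : ∀ a ∈ Sᶜ, ∀ b ∈ Sᶜ, ¬ G.Adj a b := by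
    intro a ha b hb
    exact hedgeless ⟨a, by simpa using ha⟩ ⟨b, by simpa using hb⟩
  have halpha : Fintype.card V - S.card ≤ alphaNum G := by
    rw [alphaNum]
    apply le_csSup
    · exact ⟨Fintype.card V, by rintro n ⟨s, -, rfl⟩; simpa using Finset.card_le_univ s⟩
    · exact ⟨Sᶜ, hind, by rw [Finset.card_compl]⟩
  rw [hcount] at hωS hω2
  rw [div_lt_iff₀ (by norm_num : (0:ℝ) < 2)]
  exact_mod_cast (by omega : Fintype.card V < alphaNum G * 2)
end

section
/- Let k ≥ 2 be an integer and let G be a k-connected (K₂ ∪ kK₁)-free graph. Then G is 1-tough if and only if α(G) ≤ |V(G)|/2. -/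
open SimpleGraph

variable {V : Type*}

/-! If `G - S` has more than `|S| ≥ k` components, an edge of `G - S` together with one vertex
from each of `k` components avoiding it would be an induced `K₂ ∪ kK₁`. So `V ∖ S` is independent
and `|V| - |S| ≤ α(G) ≤ |V| / 2 ≤ |S|`. Conversely, deleting the complement of a maximum
independent set leaves `α(G)` isolated vertices, so 1-toughness gives `α(G) ≤ |V| - α(G)` once
`α(G) ≥ 2`, and `α(G) ≤ 1 ≤ |V| / 2` otherwise. -/

lemma K2kK1_adj {k : ℕ} {a b : Fin 2 ⊕ Fin k} :
    (K2kK1 k).Adj a b ↔ a ≠ b ∧ a.isLeft ∧ b.isLeft := by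
  simp only [K2kK1, fromRel_adj, and_comm (a := b.isLeft = true), or_self]

namespace SimpleGraph

variable {X : Type*} {H : SimpleGraph X}

lemma card_connectedComponent_bot :
    Nat.card (⊥ : SimpleGraph X).ConnectedComponent = Nat.card X :=
  (Nat.card_eq_of_bijective _
    ⟨fun _ _ h => reachable_bot.mp (ConnectedComponent.exact h), fun c => c.exists_rep⟩).symm

lemma Connected.card_connectedComponent (h : H.Connected) :
    Nat.card H.ConnectedComponent = 1 :=
  Nat.card_eq_one_iff_unique.mpr
    ⟨h.preconnected.subsingleton_connectedComponent, ⟨H.connectedComponentMk h.nonempty.some⟩⟩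

lemma ne_and_not_adj_of_connectedComponentMk_ne {x y : X}
    (h : H.connectedComponentMk x ≠ H.connectedComponentMk y) : x ≠ y ∧ ¬H.Adj x y :=
  ⟨fun hxy => h (hxy ▸ rfl), fun hxy => h (ConnectedComponent.connectedComponentMk_eq_of_adj hxy)⟩

lemma nonempty_K2kK1_embedding_of_adj {u v : X} (huv : H.Adj u v) {k : ℕ}
    (hk : k < Nat.card H.ConnectedComponent) : Nonempty (K2kK1 k ↪g H) := by
  classical
  have : Finite H.ConnectedComponent := Nat.finite_of_card_ne_zero (by omega)
  have := Fintype.ofFinite H.ConnectedComponent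
  set c₀ := H.connectedComponentMk u
  obtain ⟨c⟩ : Nonempty (Fin k ↪ {c // c ≠ c₀}) :=
    Function.Embedding.nonempty_of_card_le (by simp [Nat.card_eq_fintype_card] at hk ⊢; omega)
  let f : Fin 2 ⊕ Fin k → X := Sum.elim ![u, v] fun i => (c i).1.out
  let comp : Fin 2 ⊕ Fin k → H.ConnectedComponent := Sum.elim (fun _ => c₀) fun i => (c i).1
  have hf : ∀ a, H.connectedComponentMk (f a) = comp a := by
    rintro (i | i)
    · fin_cases i
      exacts [rfl, (ConnectedComponent.connectedComponentMk_eq_of_adj huv).symm]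
    · exact (c i).1.out_eq
  have hsep : ∀ a b, comp a ≠ comp b → f a ≠ f b ∧ ¬H.Adj (f a) (f b) := fun a b h =>
    ne_and_not_adj_of_connectedComponentMk_ne (by rwa [hf, hf])
  have hcomp_inl_inr : ∀ (i : Fin 2) (j : Fin k), comp (.inl i) ≠ comp (.inr j) :=
    fun _ j h => (c j).2 h.symm
  have hcomp_inr : ∀ i j : Fin k, i ≠ j → comp (.inr i) ≠ comp (.inr j) :=
    fun _ _ h h' => h (c.injective (Subtype.ext h'))
  have hinj : Function.Injective f := by
    rintro (i | i) (j | j) h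
    · fin_cases i <;> fin_cases j <;> simp_all [f, huv.ne, huv.ne.symm]
    · exact absurd h (hsep _ _ (hcomp_inl_inr i j)).1
    · exact absurd h.symm (hsep _ _ (hcomp_inl_inr j i)).1
    · by_contra hij
      exact (hsep _ _ (hcomp_inr i j fun h' => hij (congrArg _ h'))).1 h
  have hadj : ∀ a b, H.Adj (f a) (f b) ↔ (K2kK1 k).Adj a b := by
    rintro (i | i) (j | j)
    · fin_cases i <;> fin_cases j <;> simp [f, K2kK1_adj, huv, huv.symm]
    · exact iff_of_false (hsep _ _ (hcomp_inl_inr i j)).2 (by simp [K2kK1_adj])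
    · exact iff_of_false (fun h => (hsep _ _ (hcomp_inl_inr j i)).2 h.symm) (by simp [K2kK1_adj])
    · by_cases hij : i = j
      · simp [hij]
      · exact iff_of_false (hsep _ _ (hcomp_inr i j hij)).2 (by simp [K2kK1_adj])
  exact ⟨⟨⟨f, hinj⟩, hadj _ _⟩⟩

end SimpleGraph

section Toughness

variable [Fintype V] {G : SimpleGraph V} {S : Finset V} {k : ℕ}

lemma alphaNum_eq_indepNum (G : SimpleGraph V) : alphaNum G = G.indepNum := by
  unfold alphaNum indepNum
  congr 1
  ext n
  refine exists_congr fun s => ?_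
  rw [isNIndepSet_iff, isIndepSet_iff]
  refine and_congr_left' ⟨fun h a ha b hb _ => h a ha b hb, fun h a ha b hb hab => ?_⟩
  exact h ha hb hab.ne hab

lemma omegaDel_eq_card_compl [DecidableEq V] (h : G.IsIndepSet (S : Set V)ᶜ) :
    omegaDel G S = Sᶜ.card := by
  have hbot : G.induce (S : Set V)ᶜ = ⊥ := by
    ext a b
    simpa using fun hab => h a.2 b.2 hab.ne hab
  rw [omegaDel, hbot, card_connectedComponent_bot, Nat.card_coe_set_eq, ← Finset.coe_compl,
    Set.ncard_coe_finset]

lemma IsKConn.le_card_of_two_le_omegaDel (hG : IsKConn G k) (hS : 2 ≤ omegaDel G S) :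
    k ≤ S.card := by
  by_contra! h
  have := (hG.2 S h).card_connectedComponent
  rw [omegaDel] at hS
  omega

lemma IndFree.isIndepSet_compl_of_lt_omegaDel (hfree : IndFree (K2kK1 k) G)
    (hS : k < omegaDel G S) : G.IsIndepSet (S : Set V)ᶜ := by
  intro a ha b hb _ hab
  obtain ⟨e⟩ := nonempty_K2kK1_embedding_of_adj (H := G.induce (S : Set V)ᶜ)
    (u := ⟨a, ha⟩) (v := ⟨b, hb⟩) hab hS
  exact hfree.false (e.trans (Embedding.induce _))

lemma two_mul_indepNum_le_card (hV : 2 ≤ Fintype.card V)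
    (htough : ∀ S : Finset V, 2 ≤ omegaDel G S → omegaDel G S ≤ S.card) :
    2 * G.indepNum ≤ Fintype.card V := by
  classical
  obtain ⟨s, hs, hcard⟩ := G.exists_isNIndepSet_indepNum
  have hω : omegaDel G sᶜ = s.card := by
    simpa using omegaDel_eq_card_compl (S := sᶜ) (by simpa using hs)
  have := s.card_add_card_compl
  by_cases h : G.indepNum < 2
  · omega
  · have := htough sᶜ (by omega)
    omega

lemma omegaDel_le_card_of_two_mul_indepNum_le (hconn : IsKConn G k)
    (hfree : IndFree (K2kK1 k) G) (hα : 2 * G.indepNum ≤ Fintype.card V)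
    (hS : 2 ≤ omegaDel G S) : omegaDel G S ≤ S.card := by
  classical
  have hk := hconn.le_card_of_two_le_omegaDel hS
  by_contra! hlt
  have hind := hfree.isIndepSet_compl_of_lt_omegaDel (S := S) (by omega)
  have := (show G.IsIndepSet (Sᶜ : Finset V) by simpa using hind).card_le_indepNum
  have := S.card_add_card_compl
  rw [omegaDel_eq_card_compl hind] at hlt
  omega

end Toughness

/-- A `k`-connected `(K₂ ∪ kK₁)`-free graph is 1-tough iff `α(G) ≤ |V(G)|/2`. -/
theorem stmt_4 {V : Type*} [Fintype V] (k : ℕ) (hk : 2 ≤ k) (G : SimpleGraph V)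
    (hconn : IsKConn G k) (hfree : IndFree (K2kK1 k) G) :
    (∀ S : Finset V, 2 ≤ omegaDel G S → omegaDel G S ≤ S.card) ↔
      (alphaNum G : ℝ) ≤ (Fintype.card V : ℝ) / 2 := by
  have hV : 2 ≤ Fintype.card V := by have := hconn.1; omega
  rw [alphaNum_eq_indepNum, le_div_iff₀ two_pos, mul_comm]
  norm_cast
  exact ⟨two_mul_indepNum_le_card hV,
    fun hα _ => omegaDel_le_card_of_two_mul_indepNum_le hconn hfree hα⟩
end

section
/- Let k ≥ 2 be an integer and let G be a (k+1)-connected (K₂ ∪ kK₁)-free graph. Then t(G) > 1 if and only if α(G) < |V(G)|/2. -/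
open SimpleGraph

variable {V : Type*}

section Helpers

lemma card_comp_of_edgeless {W : Type*} [Finite W] (H : SimpleGraph W)
    (h : ∀ a b : W, ¬ H.Adj a b) : Nat.card H.ConnectedComponent = Nat.card W := by
  symm
  refine Nat.card_eq_of_bijective H.connectedComponentMk ⟨?_, Quot.mk_surjective⟩
  intro a b hab
  obtain ⟨w⟩ := ConnectedComponent.exact hab
  cases w with
  | nil => rfl
  | cons h' _ => exact absurd h' (h _ _)

lemma indep_of_many_comps {V : Type*} [Fintype V] {k : ℕ} {G : SimpleGraph V}
    (hfree : IndFree (K2kK1 k) G) (s : Set V)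
    (hω : k + 1 ≤ Nat.card (G.induce s).ConnectedComponent) :
    ∀ a b : s, ¬ (G.induce s).Adj a b := by
  classical
  intro a b hab
  set H := G.induce s with hH
  haveI : Fintype H.ConnectedComponent := Fintype.ofFinite _
  have adj_iff : ∀ x y : s, H.Adj x y ↔ G.Adj ↑x ↑y := fun x y => Iff.rfl
  have hab' : G.Adj ↑a ↑b := (adj_iff _ _).1 hab
  have hc0 : H.connectedComponentMk b = H.connectedComponentMk a :=
    (ConnectedComponent.connectedComponentMk_eq_of_adj hab).symm
  have hk' : k ≤ Fintype.card {c : H.ConnectedComponent // c ≠ H.connectedComponentMk a} := by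
    have h1 : Fintype.card {c : H.ConnectedComponent // c ≠ H.connectedComponentMk a}
        = Fintype.card H.ConnectedComponent - 1 := by
      rw [Fintype.card_subtype_compl, Fintype.card_subtype_eq]
    rw [Nat.card_eq_fintype_card] at hω
    omega
  obtain ⟨f⟩ : Nonempty (Fin k ↪ {c : H.ConnectedComponent // c ≠ H.connectedComponentMk a}) :=
    Function.Embedding.nonempty_of_card_le (by simpa using hk')
  let g : Fin k → s := fun i =>
    Quot.out ((f i : {c : H.ConnectedComponent // _}) : H.ConnectedComponent)
  have hmk : ∀ i, H.connectedComponentMk (g i) = (f i : H.ConnectedComponent) :=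
    fun i => Quot.out_eq _
  have compne_a : ∀ i, H.connectedComponentMk (g i) ≠ H.connectedComponentMk a :=
    fun i => (hmk i) ▸ (f i).2
  have compne_b : ∀ i, H.connectedComponentMk (g i) ≠ H.connectedComponentMk b :=
    fun i => hc0 ▸ compne_a i
  have compne_g : ∀ i j : Fin k, i ≠ j →
      H.connectedComponentMk (g i) ≠ H.connectedComponentMk (g j) := by
    intro i j hij
    rw [hmk i, hmk j]
    exact fun h => hij (f.injective (Subtype.ext h))
  have vne : ∀ x y : s, H.connectedComponentMk x ≠ H.connectedComponentMk y → (↑x : V) ≠ ↑y :=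
    fun x y hxy h => hxy (by rw [Subtype.coe_injective h])
  have vnadj : ∀ x y : s, H.connectedComponentMk x ≠ H.connectedComponentMk y →
      ¬ G.Adj ↑x ↑y := fun x y hxy h =>
    hxy (ConnectedComponent.connectedComponentMk_eq_of_adj ((adj_iff x y).2 h))
  let F : Fin 2 ⊕ Fin k → V := fun x => match x with
    | Sum.inl i => if i = 0 then (a : V) else (b : V)
    | Sum.inr i => (g i : V)
  have key : ∀ x y : Fin 2 ⊕ Fin k, G.Adj (F x) (F y) ↔ (K2kK1 k).Adj x y := by
    rintro (i | i) (j | j)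
    · by_cases hij : i = j
      · subst hij; simp [F, K2kK1]
      · fin_cases i <;> fin_cases j <;>
          simp_all [F, K2kK1, hab', hab'.symm, fromRel_adj]
    · simp only [F, K2kK1, fromRel_adj]
      by_cases hi : i = 0 <;>
        simp [hi, vnadj _ _ (Ne.symm (compne_a j)), vnadj _ _ (Ne.symm (compne_b j))]
    · simp only [F, K2kK1, fromRel_adj]
      by_cases hj : j = 0 <;>
        simp [hj, vnadj _ _ (compne_a i), vnadj _ _ (compne_b i)]
    · by_cases hij : i = j
      · subst hij; simp [F, K2kK1]
      · simp [F, K2kK1, vnadj _ _ (compne_g i j hij), fromRel_adj, hij]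
  have inj : Function.Injective F := by
    rintro (i | i) (j | j) hxy
    · fin_cases i <;> fin_cases j <;> simp_all [F]
    · exfalso
      by_cases hi : i = 0 <;> simp [F, hi] at hxy <;>
        [exact vne _ _ (compne_a j) hxy.symm;
         exact vne _ _ (compne_b j) hxy.symm]
    · exfalso
      by_cases hj : j = 0 <;> simp [F, hj] at hxy <;>
        [exact vne _ _ (compne_a i) hxy; exact vne _ _ (compne_b i) hxy]
    · by_cases hij : i = j
      · rw [hij]
      · exact absurd hxy (vne _ _ (compne_g i j hij))
  exact hfree.false ⟨⟨F, inj⟩, fun {x y} => key x y⟩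

lemma alpha_bdd {V : Type*} [Fintype V] (G : SimpleGraph V) :
    BddAbove {n | ∃ s : Finset V, (∀ a ∈ s, ∀ b ∈ s, ¬ G.Adj a b) ∧ s.card = n} :=
  ⟨Fintype.card V, fun _ ⟨s, _, hc⟩ => hc ▸ s.card_le_univ⟩

lemma le_alpha {V : Type*} [Fintype V] (G : SimpleGraph V) (s : Finset V)
    (h : ∀ a ∈ s, ∀ b ∈ s, ¬ G.Adj a b) : s.card ≤ alphaNum G :=
  le_csSup (alpha_bdd G) ⟨s, h, rfl⟩

lemma exists_alpha_set {V : Type*} [Fintype V] (G : SimpleGraph V) :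
    ∃ s : Finset V, (∀ a ∈ s, ∀ b ∈ s, ¬ G.Adj a b) ∧ s.card = alphaNum G := by
  have hne : {n | ∃ s : Finset V, (∀ a ∈ s, ∀ b ∈ s, ¬ G.Adj a b) ∧ s.card = n}.Nonempty :=
    ⟨0, ∅, by simp, by simp⟩
  exact Nat.sSup_mem hne (alpha_bdd G)

lemma card_compl_set' {V : Type*} [Fintype V] (S : Finset V) :
    Nat.card ↥((S : Set V)ᶜ) = Fintype.card V - S.card := by
  classical
  rw [Nat.card_eq_fintype_card, Fintype.card_compl_set]
  congr 1
  simp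

end Helpers

/-- For a `(k+1)`-connected `(K₂ ∪ kK₁)`-free graph, `t(G) > 1` iff `α(G) < |V(G)|/2`. -/
theorem stmt_5 {V : Type*} [Fintype V] (k : ℕ) (hk : 2 ≤ k) (G : SimpleGraph V)
    (hconn : IsKConn G (k + 1)) (hfree : IndFree (K2kK1 k) G) :
    (∀ S : Finset V, 2 ≤ omegaDel G S → omegaDel G S < S.card) ↔
      (alphaNum G : ℝ) < (Fintype.card V : ℝ) / 2 := by
  classical
  have hn4 : 4 ≤ Fintype.card V := by have := hconn.1; omega
  constructor
  · intro hL
    obtain ⟨s, hs, hcard⟩ := exists_alpha_set G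
    by_cases hα : alphaNum G ≤ 1
    · have h1 : (alphaNum G : ℝ) ≤ 1 := by exact_mod_cast hα
      have h2 : (4 : ℝ) ≤ Fintype.card V := by exact_mod_cast hn4
      linarith
    · push_neg at hα
      have hsetteq : ((↑(sᶜ) : Set V))ᶜ = (↑s : Set V) := by
        rw [Finset.coe_compl, compl_compl]
      have hindep : ∀ x y : ↥((↑(sᶜ) : Set V))ᶜ,
          ¬ (G.induce ((↑(sᶜ) : Set V))ᶜ).Adj x y := by
        intro x y hxy
        have hx : (↑x : V) ∈ s := by
          simpa using x.2
        have hy : (↑y : V) ∈ s := by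
          simpa using y.2
        exact hs _ hx _ hy hxy
      have hω : omegaDel G (sᶜ) = s.card := by
        rw [omegaDel, card_comp_of_edgeless _ hindep, hsetteq]
        simp [Nat.card_eq_fintype_card]
      have h2 : 2 ≤ omegaDel G (sᶜ) := by rw [hω, hcard]; omega
      have hlt := hL (sᶜ) h2
      rw [hω, Finset.card_compl] at hlt
      have hle : s.card ≤ Fintype.card V := s.card_le_univ
      have h2n : 2 * alphaNum G < Fintype.card V := by omega
      have : (2 * alphaNum G : ℝ) < Fintype.card V := by exact_mod_cast h2n
      linarith
  · intro hα S hωS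
    by_cases hcase : omegaDel G S ≤ k
    · have hS : k + 1 ≤ S.card := by
        by_contra h
        push_neg at h
        have hc := hconn.2 S h
        have hsub : Subsingleton (G.induce ((↑S : Set V))ᶜ).ConnectedComponent :=
          hc.preconnected.subsingleton_connectedComponent
        have h1 : Nat.card (G.induce ((↑S : Set V))ᶜ).ConnectedComponent ≤ 1 := by
          haveI := Fintype.ofFinite (G.induce ((↑S : Set V))ᶜ).ConnectedComponent
          rw [Nat.card_eq_fintype_card]
          exact Fintype.card_le_one_iff_subsingleton.mpr hsub
        have h2 : 2 ≤ Nat.card (G.induce ((↑S : Set V))ᶜ).ConnectedComponent := hωS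
        omega
      omega
    · push_neg at hcase
      have hind := indep_of_many_comps hfree ((↑S : Set V)ᶜ) hcase
      have hωval : omegaDel G S = Fintype.card V - S.card := by
        rw [omegaDel, card_comp_of_edgeless _ hind, card_compl_set']
      have hle : Fintype.card V - S.card ≤ alphaNum G := by
        have hi : ∀ a ∈ Sᶜ, ∀ b ∈ Sᶜ, ¬ G.Adj a b := by
          intro a ha b hb hadj
          exact hind ⟨a, by simpa using ha⟩ ⟨b, by simpa using hb⟩ hadj
        have := le_alpha G Sᶜ hi
        rwa [Finset.card_compl] at this
      have hSle : S.card ≤ Fintype.card V := S.card_le_univ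
      rw [hωval]
      have h1 : ((Fintype.card V - S.card : ℕ) : ℝ) ≤ alphaNum G := by exact_mod_cast hle
      rw [Nat.cast_sub hSle] at h1
      have h3 : ((Fintype.card V - S.card : ℕ) : ℝ) < S.card := by
        rw [Nat.cast_sub hSle]; linarith
      exact_mod_cast h3
end

section
/- Let G be a graph, C a longest cycle in G with a fixed orientation, and H a connected component of G − V(C). If u ∈ N_G(V(H)), then the successor u⁺ of u on C is not in N_G(V(H)), and the predecessor u⁻ of u on C is not in N_G(V(H)). -/
/-!
If `f u` and `f (u + 1)` both had neighbours `x` and `y` in `H`, replacing the cycle edge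
between them by `f u, x, …, y, f (u + 1)`, with `x … y` a path inside `H`, would give a cycle
of length at least `n + 1`. The predecessor case is the successor case at `u - 1`.
-/

open SimpleGraph

variable {V : Type*}

namespace SimpleGraph

open Walk

variable {G : SimpleGraph V}

lemma ConnectedComponent.exists_isPath_of_mem_supp {s : Set V}
    {H : (G.induce s).ConnectedComponent} {x y : s} (hx : x ∈ H.supp) (hy : y ∈ H.supp) :
    ∃ P : G.Walk x y, P.IsPath ∧ ∀ v ∈ P.support, v ∈ s := by
  classical
  obtain ⟨q⟩ := H.reachable_of_mem_supp hx hy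
  let φ := (Embedding.induce (G := G) s).toHom
  have hsupp : ∀ v ∈ (q.toPath.1.map φ).support, v ∈ s := by
    simp only [Walk.support_map, List.mem_map]
    rintro _ ⟨v, -, rfl⟩
    exact v.2
  exact ⟨_, q.toPath.2.map (f := φ) Subtype.val_injective, hsupp⟩

variable {n : ℕ} {f : ZMod n → V}

def cycleArc (hadj : ∀ i, G.Adj (f i) (f (i + 1))) (a : ZMod n) :
    (k : ℕ) → G.Walk (f a) (f (a + k))
  | 0 => nil.copy rfl (by simp)
  | k + 1 => (cons (hadj a) (cycleArc hadj (a + 1) k)).copy rfl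
      (congrArg f (by push_cast; ring))

lemma length_cycleArc (hadj : ∀ i, G.Adj (f i) (f (i + 1))) (a : ZMod n) (k : ℕ) :
    (cycleArc hadj a k).length = k := by
  induction k generalizing a with
  | zero => simp [cycleArc]
  | succ k ih => simp [cycleArc, ih]

lemma support_cycleArc (hadj : ∀ i, G.Adj (f i) (f (i + 1))) (a : ZMod n) (k : ℕ) :
    (cycleArc hadj a k).support = (List.range (k + 1)).map fun i : ℕ => f (a + i) := by
  induction k generalizing a with
  | zero => simp [cycleArc]
  | succ k ih =>
    rw [List.range_succ_eq_map]
    simp [cycleArc, ih, add_assoc, add_comm (1 : ZMod n)]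

lemma isPath_cycleArc (hadj : ∀ i, G.Adj (f i) (f (i + 1))) (hinj : Function.Injective f)
    (a : ZMod n) {k : ℕ} (hk : k < n) :
    (cycleArc hadj a k).IsPath := by
  rw [isPath_def, support_cycleArc]
  refine List.Nodup.map_on (fun i hi j hj hij => ?_) List.nodup_range
  rw [List.mem_range] at hi hj
  have := (ZMod.natCast_eq_natCast_iff' i j n).1 (add_left_cancel (hinj hij))
  rwa [Nat.mod_eq_of_lt (by omega), Nat.mod_eq_of_lt (by omega)] at this

lemma exists_isPath_succ_self [NeZero n] (hadj : ∀ i, G.Adj (f i) (f (i + 1)))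
    (hinj : Function.Injective f) (u : ZMod n) :
    ∃ w : G.Walk (f (u + 1)) (f u), w.IsPath ∧ w.length + 1 = n ∧
      ∀ v ∈ w.support, v ∈ Set.range f := by
  have hn : 1 ≤ n := Nat.one_le_iff_ne_zero.2 (NeZero.ne n)
  have hend : f (u + 1 + (n - 1 : ℕ)) = f u := by
    rw [Nat.cast_sub hn, ZMod.natCast_self]; push_cast; ring_nf
  refine ⟨(cycleArc hadj (u + 1) (n - 1)).copy rfl hend, ?_, ?_, ?_⟩
  · exact (isPath_copy _ _ _).2 (isPath_cycleArc hadj hinj _ (by omega))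
  · rw [length_copy, length_cycleArc]; omega
  · simp [support_cycleArc]

lemma exists_isCycle_of_isPath_compl_range [NeZero n]
    (hadj : ∀ i, G.Adj (f i) (f (i + 1))) (hinj : Function.Injective f)
    {x y : V} (P : G.Walk x y) (hP : P.IsPath) (hPf : ∀ v ∈ P.support, v ∉ Set.range f)
    (u : ZMod n) (hx : G.Adj (f u) x) (hy : G.Adj (f (u + 1)) y) :
    ∃ c : G.Walk (f u) (f u), c.IsCycle ∧ c.length = P.length + n + 1 := by
  obtain ⟨w, hw, hwlen, hwf⟩ := exists_isPath_succ_self hadj hinj u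
  refine ⟨cons hx (P.append (cons hy.symm w)), (cons_isCycle_iff _ _).2 ⟨?_, ?_⟩, ?_⟩
  · rw [isPath_def, support_append, support_cons, List.tail_cons, List.nodup_append]
    exact ⟨hP.support_nodup, hw.support_nodup,
      fun a ha b hb hab => hPf a ha (hab ▸ hwf b hb)⟩
  · rw [edges_append, edges_cons, List.mem_append, List.mem_cons]
    rintro (he | he | he)
    · exact hPf _ (P.fst_mem_support_of_mem_edges he) ⟨u, rfl⟩
    · rcases Sym2.eq_iff.1 he with ⟨rfl, -⟩ | ⟨hu, -⟩
      · exact hPf _ P.end_mem_support ⟨u, rfl⟩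
      · exact (hadj u).ne hu
    · exact hPf _ P.start_mem_support (hwf _ (w.snd_mem_support_of_mem_edges he))
  · simp only [length_cons, length_append]
    omega

lemma not_adj_supp_of_adj_supp_succ [NeZero n] (hadj : ∀ i, G.Adj (f i) (f (i + 1)))
    (hinj : Function.Injective f)
    (hlong : ∀ (v : V) (c : G.Walk v v), c.IsCycle → c.length ≤ n)
    (H : (G.induce (Set.range f)ᶜ).ConnectedComponent) (u : ZMod n)
    (hu : ∃ x ∈ Subtype.val '' H.supp, G.Adj (f u) x) :
    ¬ ∃ y ∈ Subtype.val '' H.supp, G.Adj (f (u + 1)) y := by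
  rintro ⟨_, ⟨y, hyH, rfl⟩, hy⟩
  obtain ⟨_, ⟨x, hxH, rfl⟩, hx⟩ := hu
  obtain ⟨P, hP, hPf⟩ := ConnectedComponent.exists_isPath_of_mem_supp hxH hyH
  obtain ⟨c, hc, hclen⟩ := exists_isCycle_of_isPath_compl_range hadj hinj P hP hPf u hx hy
  have := hlong _ c hc
  omega

end SimpleGraph

theorem stmt_6_general {V : Type*} (G : SimpleGraph V) (n : ℕ) (hn : 3 ≤ n)
    (f : ZMod n → V) (hinj : Function.Injective f)
    (hadj : ∀ i : ZMod n, G.Adj (f i) (f (i + 1)))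
    (hlong : ∀ (v : V) (c : G.Walk v v), c.IsCycle → c.length ≤ n)
    (H : (G.induce (Set.range f)ᶜ).ConnectedComponent)
    (u : ZMod n) (hu : ∃ h ∈ Subtype.val '' H.supp, G.Adj (f u) h) :
    (¬ ∃ h ∈ Subtype.val '' H.supp, G.Adj (f (u + 1)) h) ∧
    (¬ ∃ h ∈ Subtype.val '' H.supp, G.Adj (f (u - 1)) h) := by
  have : NeZero n := ⟨by omega⟩
  refine ⟨G.not_adj_supp_of_adj_supp_succ hadj hinj hlong H u hu, fun hpred => ?_⟩
  refine G.not_adj_supp_of_adj_supp_succ hadj hinj hlong H (u - 1) hpred ?_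
  rwa [sub_add_cancel]

/-- Successors and predecessors on a longest cycle of neighbors of a component of `G - C`
are not neighbors of that component. -/
theorem stmt_6 {V : Type*} [Fintype V] (G : SimpleGraph V) (n : ℕ) (hn : 3 ≤ n)
    (f : ZMod n → V) (hinj : Function.Injective f)
    (hadj : ∀ i : ZMod n, G.Adj (f i) (f (i + 1)))
    (hlong : ∀ (v : V) (c : G.Walk v v), c.IsCycle → c.length ≤ n)
    (H : (G.induce (Set.range f)ᶜ).ConnectedComponent)
    (u : ZMod n) (hu : ∃ h ∈ Subtype.val '' H.supp, G.Adj (f u) h) :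
    (¬ ∃ h ∈ Subtype.val '' H.supp, G.Adj (f (u + 1)) h) ∧
    (¬ ∃ h ∈ Subtype.val '' H.supp, G.Adj (f (u - 1)) h) :=
  stmt_6_general G n hn f hinj hadj hlong H u hu
end

section
/- Let G be a graph, C a longest cycle in G with a fixed orientation, and H a component of G − V(C). If u, v ∈ N_G(V(H)) are distinct, then there is no u⁺v⁺-path in G all of whose internal vertices avoid V(C); in particular u⁺v⁺ ∉ E(G). -/
open SimpleGraph

variable {V : Type*}

/-!
Suppose `P` is a `u⁺v⁺`-path whose inner vertices avoid `C`. If `P` meets `H`, then following `P`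
from `H` back to `C` shows that `u⁺` has a neighbour in `H`, so a path `u, H, u⁺` of length at
least `2` replaces the edge `uu⁺` of `C` and gives a longer cycle. Otherwise `P` is disjoint from a
`uv`-path `Q` through `H`, and `Q`, the arc of `C` from `v` back to `u⁺`, `P` and the arc from `v⁺`
on to `u` form a cycle of length `|Q| + |P| + |C| - 2 > |C|`.
-/

theorem ZMod.exists_add_add_two_eq {n : ℕ} [NeZero n] {u v : ZMod n} (huv : u ≠ v) :
    ∃ x y : ℕ, x + y + 2 = n ∧ u + 1 + x = v ∧ v + 1 + y = u := by
  set x := (v - (u + 1)).val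
  have hx : u + 1 + x = v := by simp [x]
  have hxn : x + 1 < n := by
    refine lt_of_le_of_ne (ZMod.val_lt _) fun h => huv ?_
    have h0 : ((x + 1 : ℕ) : ZMod n) = 0 := h ▸ ZMod.natCast_self n
    push_cast at h0
    linear_combination hx - h0
  refine ⟨x, n - x - 2, by omega, hx, ?_⟩
  have h0 : ((x + (n - x - 2) + 2 : ℕ) : ZMod n) = 0 := by
    rw [show x + (n - x - 2) + 2 = n by omega, ZMod.natCast_self]
  push_cast at h0
  linear_combination h0 - hx

namespace SimpleGraph

variable {G : SimpleGraph V}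

namespace Walk

variable {x y z w : V}

def innerVertices (p : G.Walk x y) : Set V := {w | w ∈ p.support ∧ w ≠ x ∧ w ≠ y}

theorem IsPath.start_notMem_support_tail {p : G.Walk x y} (hp : p.IsPath) :
    x ∉ p.support.tail := by
  have h := hp.support_nodup
  rw [← p.cons_tail_support] at h
  exact (List.nodup_cons.mp h).1

theorem IsPath.eq_or_mem_innerVertices {p : G.Walk x y} (hp : p.IsPath)
    (hw : w ∈ p.support.tail) : w = y ∨ w ∈ p.innerVertices := by
  have hwx : w ≠ x := fun h => hp.start_notMem_support_tail (h ▸ hw)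
  have hws : w ∈ p.support := by rw [← p.cons_tail_support]; exact List.mem_cons_of_mem _ hw
  by_cases hwy : w = y
  · exact Or.inl hwy
  · exact Or.inr ⟨hws, hwx, hwy⟩

theorem IsPath.mem_support_or_mem_innerVertices_of_append {p : G.Walk x y} {q : G.Walk y z}
    (hp : p.IsPath) (hw : w ∈ (p.append q).support.tail) :
    w ∈ q.support ∨ w ∈ p.innerVertices := by
  rw [tail_support_append, List.mem_append] at hw
  rcases hw with hw | hw
  · rcases hp.eq_or_mem_innerVertices hw with rfl | hw
    · exact Or.inl q.start_mem_support
    · exact Or.inr hw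
  · rw [← q.cons_tail_support]
    exact Or.inl (List.mem_cons_of_mem _ hw)

theorem IsPath.append_of_innerVertices_subset {s : Set V} {p : G.Walk x y} {q : G.Walk y z}
    (hp : p.IsPath) (hq : q.IsPath) (hps : p.innerVertices ⊆ sᶜ) (hqs : ∀ w ∈ q.support, w ∈ s)
    (hx : x ∉ q.support) : (p.append q).IsPath := by
  refine IsPath.mk' ?_
  rw [support_append, List.nodup_append]
  refine ⟨hp.support_nodup, hq.support_nodup.sublist (List.tail_sublist _), ?_⟩
  rintro w hwp w' hwq rfl
  have hwq' : w ∈ q.support := List.mem_of_mem_tail hwq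
  by_cases hwx : w = x
  · exact hx (hwx ▸ hwq')
  by_cases hwy : w = y
  · exact hq.start_notMem_support_tail (hwy ▸ hwq)
  exact hps ⟨hwp, hwx, hwy⟩ (hqs w hwq')

end Walk

namespace ConnectedComponent

variable {s : Set V} (H : (G.induce sᶜ).ConnectedComponent)

theorem image_val_supp_subset_compl : Subtype.val '' H.supp ⊆ sᶜ := by
  rintro _ ⟨w, _, rfl⟩
  exact w.2

theorem mem_image_val_supp_of_adj {x y : V} (hx : x ∈ Subtype.val '' H.supp) (hxy : G.Adj x y)
    (hy : y ∉ s) : y ∈ Subtype.val '' H.supp := by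
  obtain ⟨x, hxH, rfl⟩ := hx
  refine ⟨⟨y, hy⟩, ?_, rfl⟩
  rw [mem_supp_iff] at hxH ⊢
  rw [← hxH]
  exact ConnectedComponent.sound (show (G.induce sᶜ).Adj x ⟨y, hy⟩ from hxy).reachable.symm

theorem exists_adj_of_walk {x y : V} (q : G.Walk x y) (hx : x ∈ Subtype.val '' H.supp)
    (hy : y ∈ s) (hq : ∀ w ∈ q.support, w ≠ y → w ∉ s) :
    ∃ z ∈ Subtype.val '' H.supp, G.Adj y z := by
  induction q with
  | nil => exact absurd hy (H.image_val_supp_subset_compl hx)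
  | @cons x x' y hxx' q ih =>
    by_cases hx'y : x' = y
    · subst hx'y
      exact ⟨x, hx, hxx'.symm⟩
    have hx' : x' ∉ s := hq x' (by simp) hx'y
    exact ih (H.mem_image_val_supp_of_adj hx hxx' hx') hy
      (fun w hw => hq w (List.mem_cons_of_mem _ hw))

theorem exists_isPath_of_mem {x y : V} (hx : x ∈ Subtype.val '' H.supp)
    (hy : y ∈ Subtype.val '' H.supp) :
    ∃ W : G.Walk x y, W.IsPath ∧ ∀ w ∈ W.support, w ∈ Subtype.val '' H.supp := by
  classical
  obtain ⟨x, hxH, rfl⟩ := hx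
  obtain ⟨y, hyH, rfl⟩ := hy
  rw [mem_supp_iff] at hxH hyH
  let q : (G.induce sᶜ).Path x y := (ConnectedComponent.exact (hxH.trans hyH.symm)).some.toPath
  refine ⟨q.1.map (Embedding.induce sᶜ).toHom,
    q.2.map Subtype.val_injective, ?_⟩
  intro w (hw : w ∈ (q.1.map (Embedding.induce sᶜ).toHom).support)
  rw [Walk.support_map, List.mem_map] at hw
  obtain ⟨w, hw, rfl⟩ := hw
  refine ⟨w, ?_, rfl⟩
  rw [mem_supp_iff, ← hxH]
  exact (ConnectedComponent.sound ⟨q.1.takeUntil w hw⟩).symm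

theorem exists_isPath_through {a b : V} (hab : a ≠ b) (has : a ∈ s) (hbs : b ∈ s)
    (ha : ∃ h ∈ Subtype.val '' H.supp, G.Adj a h) (hb : ∃ h ∈ Subtype.val '' H.supp, G.Adj b h) :
    ∃ Q : G.Walk a b, Q.IsPath ∧ 2 ≤ Q.length ∧ Q.innerVertices ⊆ Subtype.val '' H.supp := by
  obtain ⟨x, hxH, hax⟩ := ha
  obtain ⟨y, hyH, hby⟩ := hb
  obtain ⟨W, hW, hWH⟩ := H.exists_isPath_of_mem hxH hyH
  have hWs : ∀ w ∈ W.support, w ∉ s := fun w hw => H.image_val_supp_subset_compl (hWH w hw)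
  have hWb : b ∉ W.support := fun h => hWs b h hbs
  refine ⟨Walk.cons hax (W.concat hby.symm), (hW.concat hWb _).cons ?_, ?_, ?_⟩
  · simpa [Walk.support_concat, hab] using fun h => hWs a h has
  · simp [Walk.length_concat]
  · rintro w ⟨hw, hwa, hwb⟩
    simp only [Walk.support_cons, Walk.support_concat, List.mem_cons, List.mem_append,
      List.not_mem_nil, or_false] at hw
    rcases hw with rfl | hw | rfl
    · exact absurd rfl hwa
    · exact hWH w hw
    · exact absurd rfl hwb

end ConnectedComponent

section Arc

variable {n : ℕ} {f : ZMod n → V} (hadj : ∀ i, G.Adj (f i) (f (i + 1)))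

def arc : (a b : ZMod n) → (k : ℕ) → a + k = b → G.Walk (f a) (f b)
  | a, _, 0, h => Walk.nil.copy rfl (by rw [← h, Nat.cast_zero, add_zero])
  | a, b, k + 1, h => Walk.cons (hadj a) (arc (a + 1) b k (by rw [← h]; push_cast; ring))

@[simp]
theorem length_arc (a b : ZMod n) (k : ℕ) (h : a + k = b) : (arc hadj a b k h).length = k := by
  induction k generalizing a with
  | zero => simp [arc]
  | succ k ih => simp [arc, ih]

theorem support_arc (a b : ZMod n) (k : ℕ) (h : a + k = b) :
    (arc hadj a b k h).support = (List.range (k + 1)).map fun i : ℕ => f (a + i) := by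
  induction k generalizing a with
  | zero => simp [arc]
  | succ k ih =>
    rw [arc, Walk.support_cons, ih, List.range_succ_eq_map (n := k + 1), List.map_cons,
      List.map_map]
    congr 1
    · simp
    · refine List.map_congr_left fun i _ => ?_
      simp only [Function.comp_apply, Nat.cast_succ]
      ring_nf

theorem mem_support_arc {a b : ZMod n} {k : ℕ} {h : a + k = b} {w : V} :
    w ∈ (arc hadj a b k h).support ↔ ∃ i ≤ k, f (a + i) = w := by
  simp [support_arc]

theorem mem_range_of_mem_support_arc {a b : ZMod n} {k : ℕ} {h : a + k = b} {w : V}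
    (hw : w ∈ (arc hadj a b k h).support) : w ∈ Set.range f := by
  obtain ⟨i, -, rfl⟩ := (mem_support_arc hadj).mp hw
  exact ⟨_, rfl⟩

variable {hadj}

theorem eq_of_apply_add_natCast_eq (hinj : Function.Injective f) {a : ZMod n} {i j : ℕ}
    (hi : i < n) (hj : j < n) (h : f (a + i) = f (a + j)) : i = j := by
  have := add_left_cancel (hinj h)
  rwa [ZMod.natCast_eq_natCast_iff', Nat.mod_eq_of_lt hi, Nat.mod_eq_of_lt hj] at this

theorem isPath_arc (hinj : Function.Injective f) {a b : ZMod n} {k : ℕ} (h : a + k = b)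
    (hk : k < n) : (arc hadj a b k h).IsPath := by
  refine Walk.IsPath.mk' ?_
  rw [support_arc]
  refine List.nodup_range.map_on fun i hi j hj hij => ?_
  rw [List.mem_range] at hi hj
  exact eq_of_apply_add_natCast_eq hinj (by omega) (by omega) hij

theorem apply_add_notMem_support_arc (hinj : Function.Injective f) {a b : ZMod n} {k m : ℕ}
    (h : a + k = b) (hkm : k < m) (hm : m < n) : f (a + m) ∉ (arc hadj a b k h).support := by
  rw [mem_support_arc]
  rintro ⟨i, hik, hi⟩
  have := eq_of_apply_add_natCast_eq hinj (by omega) hm hi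
  omega

theorem disjoint_support_arc (hinj : Function.Injective f) {u v : ZMod n} {x y : ℕ}
    (hxy : x + y + 2 = n) (hx : u + 1 + x = v) (hy : v + 1 + y = u) :
    (arc hadj (u + 1) v x hx).support.Disjoint (arc hadj (v + 1) u y hy).support := by
  intro w hw₁ hw₂
  obtain ⟨j, hj, rfl⟩ := (mem_support_arc hadj).mp hw₂
  have := apply_add_notMem_support_arc (hadj := hadj) hinj hx (m := x + 1 + j) (by omega)
    (by omega)
  rw [show u + 1 + ((x + 1 + j : ℕ) : ZMod n) = v + 1 + j by push_cast; linear_combination hx]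
    at this
  exact this hw₁

end Arc

section LongestCycle

variable {n : ℕ} {f : ZMod n → V}

theorem length_add_le_of_innerVertices_subset (hinj : Function.Injective f)
    (hadj : ∀ i, G.Adj (f i) (f (i + 1)))
    (hlong : ∀ (v : V) (c : G.Walk v v), c.IsCycle → c.length ≤ n)
    {a b : ZMod n} {Q : G.Walk (f a) (f b)} (hQ : Q.IsPath)
    (hQC : Q.innerVertices ⊆ (Set.range f)ᶜ) {k : ℕ} (hk : k < n) (hba : b + k = a) :
    Q.length + k ≤ n := by
  by_cases hlen : 1 < Q.length ∨ 1 < k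
  swap
  · omega
  set B := arc hadj b a k hba
  have hB : B.IsPath := isPath_arc hinj hba hk
  have hcyc : (Q.append B).IsCycle := by
    refine hQ.isCycle_append hB (fun w hwQ hwB => ?_) (by simpa [B] using hlen)
    rcases hQ.eq_or_mem_innerVertices hwQ with rfl | hw
    · exact hB.start_notMem_support_tail hwB
    · exact hQC hw (mem_range_of_mem_support_arc hadj (List.mem_of_mem_tail hwB))
  simpa [B] using hlong _ _ hcyc

theorem not_exists_adj_succ [Fact (1 < n)] (hinj : Function.Injective f)
    (hadj : ∀ i, G.Adj (f i) (f (i + 1)))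
    (hlong : ∀ (v : V) (c : G.Walk v v), c.IsCycle → c.length ≤ n)
    (H : (G.induce (Set.range f)ᶜ).ConnectedComponent) {a : ZMod n}
    (ha : ∃ h ∈ Subtype.val '' H.supp, G.Adj (f a) h) :
    ¬ ∃ h ∈ Subtype.val '' H.supp, G.Adj (f (a + 1)) h := by
  intro ha₁
  have hn : 1 < n := Fact.out
  obtain ⟨Q, hQ, hQlen, hQH⟩ :=
    H.exists_isPath_through (hinj.ne (by simp)) ⟨a, rfl⟩ ⟨a + 1, rfl⟩ ha ha₁
  have := length_add_le_of_innerVertices_subset hinj hadj hlong hQ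
    (hQH.trans H.image_val_supp_subset_compl) (k := n - 1) (by omega)
    (by rw [Nat.cast_pred (by omega), ZMod.natCast_self]; ring)
  omega

theorem length_add_length_le_two_of_crossing [NeZero n] (hinj : Function.Injective f)
    (hadj : ∀ i, G.Adj (f i) (f (i + 1)))
    (hlong : ∀ (v : V) (c : G.Walk v v), c.IsCycle → c.length ≤ n)
    {u v : ZMod n} (huv : u ≠ v) {Q₁ : G.Walk (f u) (f v)} {Q₂ : G.Walk (f (u + 1)) (f (v + 1))}
    (hQ₁ : Q₁.IsPath) (hQ₂ : Q₂.IsPath) (hQ₁C : Q₁.innerVertices ⊆ (Set.range f)ᶜ)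
    (hQ₂C : Q₂.innerVertices ⊆ (Set.range f)ᶜ) (hQ : Disjoint Q₁.innerVertices Q₂.innerVertices) :
    Q₁.length + Q₂.length ≤ 2 := by
  obtain ⟨x, y, hxy, hx, hy⟩ := ZMod.exists_add_add_two_eq huv
  by_cases hlen : 1 < Q₁.length + x ∨ 1 < Q₂.length + y
  swap
  · omega
  set B₁ := arc hadj (u + 1) v x hx
  set B₂ := arc hadj (v + 1) u y hy
  have hB₁ : B₁.IsPath := isPath_arc hinj hx (by omega)
  have hB₂ : B₂.IsPath := isPath_arc hinj hy (by omega)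
  have hB₁C : ∀ w ∈ B₁.reverse.support, w ∈ Set.range f := fun w hw =>
    mem_range_of_mem_support_arc hadj (by simpa using hw)
  have hB₂C : ∀ w ∈ B₂.support, w ∈ Set.range f := fun w hw => mem_range_of_mem_support_arc hadj hw
  have hB := disjoint_support_arc (hadj := hadj) hinj hxy hx hy
  have hu : f u ∉ B₁.support := fun h => hB h B₂.end_mem_support
  have hu₁ : f (u + 1) ∉ B₂.support := fun h => hB B₁.start_mem_support h
  have hp := hQ₁.append_of_innerVertices_subset hB₁.reverse hQ₁C hB₁C (by simpa using hu)
  have hq := hQ₂.append_of_innerVertices_subset hB₂ hQ₂C hB₂C hu₁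
  have hcyc : ((Q₁.append B₁.reverse).append (Q₂.append B₂)).IsCycle := by
    refine hp.isCycle_append hq (fun w hwp hwq => ?_) (by simpa [B₁, B₂] using hlen)
    rcases hQ₁.mem_support_or_mem_innerVertices_of_append hwp with hw₁ | hw₁ <;>
      rcases hQ₂.mem_support_or_mem_innerVertices_of_append hwq with hw₂ | hw₂
    · exact hB (by simpa using hw₁) hw₂
    · exact hQ₂C hw₂ (hB₁C w hw₁)
    · exact hQ₁C hw₁ (hB₂C w hw₂)
    · exact Set.disjoint_left.mp hQ hw₁ hw₂
  have := hlong _ _ hcyc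
  simp only [B₁, B₂, Walk.length_append, Walk.length_reverse, length_arc] at this
  omega

end LongestCycle

end SimpleGraph

theorem stmt_7_general {V : Type*} (G : SimpleGraph V) (n : ℕ) (hn : 3 ≤ n)
    (f : ZMod n → V) (hinj : Function.Injective f)
    (hadj : ∀ i : ZMod n, G.Adj (f i) (f (i + 1)))
    (hlong : ∀ (v : V) (c : G.Walk v v), c.IsCycle → c.length ≤ n)
    (H : (G.induce (Set.range f)ᶜ).ConnectedComponent)
    (u v : ZMod n) (huv : u ≠ v)
    (hu : ∃ h ∈ Subtype.val '' H.supp, G.Adj (f u) h)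
    (hv : ∃ h ∈ Subtype.val '' H.supp, G.Adj (f v) h) :
    (¬ ∃ p : G.Walk (f (u + 1)) (f (v + 1)), p.IsPath ∧
        ∀ w ∈ p.support, w ≠ f (u + 1) → w ≠ f (v + 1) → w ∉ Set.range f) ∧
    ¬ G.Adj (f (u + 1)) (f (v + 1)) := by
  classical
  have : Fact (1 < n) := ⟨by omega⟩
  have key : ¬ ∃ p : G.Walk (f (u + 1)) (f (v + 1)), p.IsPath ∧
      ∀ w ∈ p.support, w ≠ f (u + 1) → w ≠ f (v + 1) → w ∉ Set.range f := by
    rintro ⟨p, hp, hpC⟩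
    by_cases hpH : ∃ w ∈ p.support, w ∈ Subtype.val '' H.supp
    · obtain ⟨w, hwp, hwH⟩ := hpH
      have hv₁ : f (v + 1) ∉ (p.takeUntil w hwp).support :=
        Walk.endpoint_notMem_support_takeUntil hp hwp
          fun h => H.image_val_supp_subset_compl hwH ⟨v + 1, h⟩
      refine not_exists_adj_succ hinj hadj hlong H hu <|
        H.exists_adj_of_walk (p.takeUntil w hwp).reverse hwH ⟨u + 1, rfl⟩ fun x hx hxu => ?_
      rw [Walk.support_reverse, List.mem_reverse] at hx
      exact hpC x (p.support_takeUntil_subset_support hwp hx) hxu fun h => hv₁ (h ▸ hx)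
    · simp only [not_exists, not_and] at hpH
      obtain ⟨Q, hQ, hQlen, hQH⟩ := H.exists_isPath_through (hinj.ne huv) ⟨u, rfl⟩ ⟨v, rfl⟩ hu hv
      have := length_add_length_le_two_of_crossing hinj hadj hlong huv hQ hp
        (hQH.trans H.image_val_supp_subset_compl) (fun w hw => hpC w hw.1 hw.2.1 hw.2.2)
        (Set.disjoint_of_subset_left hQH (Set.disjoint_left.mpr fun w hwH hwp => hpH w hwp.1 hwH))
      have : p.length ≠ 0 := fun h => huv (add_right_cancel (hinj (Walk.eq_of_length_eq_zero h)))
      omega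
  exact ⟨key, fun h => key ⟨h.toWalk, h.isPath_toWalk, by simp⟩⟩

/-- No path between successors of two neighbors of a component of `G - C` avoiding `C`. -/
theorem stmt_7 {V : Type*} [Fintype V] (G : SimpleGraph V) (n : ℕ) (hn : 3 ≤ n)
    (f : ZMod n → V) (hinj : Function.Injective f)
    (hadj : ∀ i : ZMod n, G.Adj (f i) (f (i + 1)))
    (hlong : ∀ (v : V) (c : G.Walk v v), c.IsCycle → c.length ≤ n)
    (H : (G.induce (Set.range f)ᶜ).ConnectedComponent)
    (u v : ZMod n) (huv : u ≠ v)
    (hu : ∃ h ∈ Subtype.val '' H.supp, G.Adj (f u) h)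
    (hv : ∃ h ∈ Subtype.val '' H.supp, G.Adj (f v) h) :
    (¬ ∃ p : G.Walk (f (u + 1)) (f (v + 1)), p.IsPath ∧
        ∀ w ∈ p.support, w ≠ f (u + 1) → w ≠ f (v + 1) → w ∉ Set.range f) ∧
    ¬ G.Adj (f (u + 1)) (f (v + 1)) :=
  stmt_7_general G n hn f hinj hadj hlong H u v huv hu hv
end

section
/- Let G be a graph, a, b ∈ V(G), P a longest ab-path in G oriented from a to b, and H a component of G − V(P). If u ∈ N_G(V(H)), then the successor u⁺ of u on P (if it exists) is not in N_G(V(H)). -/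
/-!
If `u` and its successor `u⁺` on `P` both had neighbours `x`, `y` in `H`, then replacing the edge
`u u⁺` of `P` by `u x ⋯ y u⁺`, routed through a path from `x` to `y` inside `H`, would give an
`ab`-path longer than `P`, since `H` is disjoint from `P`.
-/

open SimpleGraph

variable {V : Type*}

namespace SimpleGraph

variable {G : SimpleGraph V}

theorem exists_isPath_of_isChain_of_nodup {l : List V} (hchain : l.IsChain G.Adj)
    (hnodup : l.Nodup) {a b : V} (ha : l.head? = some a) (hb : l.getLast? = some b) :
    ∃ p : G.Walk a b, p.IsPath ∧ p.support = l := by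
  have hne : l ≠ [] := by rintro rfl; simp at ha
  have hhead : l.head hne = a := by simpa [List.head?_eq_some_head hne] using ha
  have hlast : l.getLast hne = b := by simpa [List.getLast?_eq_some_getLast hne] using hb
  refine ⟨(Walk.ofSupport l hne hchain).copy hhead hlast, ?_, by simp⟩
  simpa [Walk.isPath_def] using hnodup

theorem exists_isPath_of_detour {l₁ l₂ : List V} (hchain : (l₁ ++ l₂).IsChain G.Adj)
    (hnodup : (l₁ ++ l₂).Nodup) {a b u v x y : V} (ha : (l₁ ++ l₂).head? = some a)
    (hb : (l₁ ++ l₂).getLast? = some b) (hu : l₁.getLast? = some u) (hv : l₂.head? = some v)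
    (q : G.Walk x y) (hq : q.IsPath) (hdisj : ∀ z ∈ q.support, z ∉ l₁ ++ l₂)
    (hux : G.Adj u x) (hyv : G.Adj y v) :
    ∃ p : G.Walk a b, p.IsPath ∧ p.length = l₁.length + l₂.length + q.length := by
  have hl₁ : l₁ ≠ [] := by rintro rfl; simp at hu
  have hl₂ : l₂ ≠ [] := by rintro rfl; simp at hv
  obtain ⟨hc₁, hc₂, -⟩ := List.isChain_append.1 hchain
  obtain ⟨hn₁, hn₂, hn₁₂⟩ := List.nodup_append.1 hnodup
  have hx : q.support.head? = some x := by
    rw [List.head?_eq_some_head q.support_ne_nil, q.head_support]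
  have hy : q.support.getLast? = some y := by
    rw [List.getLast?_eq_some_getLast q.support_ne_nil, q.getLast_support]
  have hchain' : (l₁ ++ q.support ++ l₂).IsChain G.Adj := by
    simp [List.isChain_append, List.head?_append, hc₁, hc₂, q.isChain_adj_support, hu, hv, hx, hy,
      hux, hyv]
  have hnodup' : (l₁ ++ q.support ++ l₂).Nodup := by
    refine List.nodup_append.2 ⟨List.nodup_append.2 ⟨hn₁, hq.support_nodup, ?_⟩, hn₂, ?_⟩
    · rintro z hz w hw rfl
      exact hdisj z hw (List.mem_append_left _ hz)
    · rintro z hz w hw rfl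
      rcases List.mem_append.1 hz with hz | hz
      · exact hn₁₂ z hz z hw rfl
      · exact hdisj z hz (List.mem_append_right _ hw)
  have ha' : (l₁ ++ q.support ++ l₂).head? = some a := by
    rw [List.append_assoc, List.head?_append_of_ne_nil _ hl₁]
    rwa [List.head?_append_of_ne_nil _ hl₁] at ha
  have hb' : (l₁ ++ q.support ++ l₂).getLast? = some b := by
    rw [List.getLast?_append_of_ne_nil _ hl₂]
    rwa [List.getLast?_append_of_ne_nil _ hl₂] at hb
  obtain ⟨p, hp, hsupp⟩ := exists_isPath_of_isChain_of_nodup hchain' hnodup' ha' hb'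
  refine ⟨p, hp, ?_⟩
  have := congrArg List.length hsupp
  simp only [Walk.length_support, List.length_append] at this
  omega

theorem exists_isPath_of_detour_getElem {l : List V} (hchain : l.IsChain G.Adj)
    (hnodup : l.Nodup) {a b x y : V} (ha : l.head? = some a) (hb : l.getLast? = some b)
    {k : ℕ} (hk : k + 1 < l.length) (q : G.Walk x y) (hq : q.IsPath)
    (hdisj : ∀ z ∈ q.support, z ∉ l) (hx : G.Adj l[k] x) (hy : G.Adj y l[k + 1]) :
    ∃ p : G.Walk a b, p.IsPath ∧ p.length = l.length + q.length := by
  rw [← l.take_append_drop (k + 1)] at hchain hnodup ha hb hdisj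
  have hu : (l.take (k + 1)).getLast? = some l[k] := by
    rw [List.getLast?_eq_getElem?]
    simp [Nat.min_eq_left hk.le]
  have hv : (l.drop (k + 1)).head? = some l[k + 1] := by simp [List.head?_drop]
  obtain ⟨p, hp, hlen⟩ := exists_isPath_of_detour hchain hnodup ha hb hu hv q hq hdisj hx hy
  exact ⟨p, hp, by simp only [hlen, List.length_take, List.length_drop]; omega⟩

theorem ConnectedComponent.exists_isPath_of_mem_supp_induce {s : Set V}
    {H : (G.induce s).ConnectedComponent} {x y : s} (hx : x ∈ H.supp) (hy : y ∈ H.supp) :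
    ∃ q : G.Walk x y, q.IsPath ∧ ∀ z ∈ q.support, z ∈ s := by
  classical
  obtain ⟨w⟩ := H.reachable_of_mem_supp hx hy
  have hsupp : ∀ z ∈ (w.toPath.1.map (Embedding.induce s).toHom).support, z ∈ s := by
    simp only [Walk.support_map, List.mem_map]
    rintro _ ⟨z, -, rfl⟩
    exact z.2
  exact ⟨_, w.toPath.2.map Subtype.val_injective, hsupp⟩

end SimpleGraph

theorem stmt_8_general {V : Type*} (G : SimpleGraph V) (a b : V) (n : ℕ)
    (f : Fin (n + 1) → V) (hinj : Function.Injective f)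
    (ha : f 0 = a) (hb : f (Fin.last n) = b)
    (hadj : ∀ i : Fin n, G.Adj (f i.castSucc) (f i.succ))
    (hlong : ∀ q : G.Walk a b, q.IsPath → q.length ≤ n)
    (H : (G.induce (Set.range f)ᶜ).ConnectedComponent)
    (i : Fin n) (hu : ∃ h ∈ Subtype.val '' H.supp, G.Adj (f i.castSucc) h) :
    ¬ ∃ h ∈ Subtype.val '' H.supp, G.Adj (f i.succ) h := by
  obtain ⟨_, ⟨x, hx, rfl⟩, hux⟩ := hu
  rintro ⟨_, ⟨y, hy, rfl⟩, hvy⟩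
  obtain ⟨q, hq, hqP⟩ := ConnectedComponent.exists_isPath_of_mem_supp_induce hx hy
  have hPa : (List.ofFn f).head? = some a := by simp [ha]
  have hPb : (List.ofFn f).getLast? = some b := by
    rw [List.getLast?_eq_getElem?]
    simp [-List.ofFn_succ, ← hb, Fin.last]
  obtain ⟨p, hp, hlen⟩ := exists_isPath_of_detour_getElem
    (List.isChain_ofFn.2 fun j hj => hadj ⟨j, by omega⟩) (List.nodup_ofFn.2 hinj) hPa hPb
    (k := i) (by simp) q hq (fun z hz hzf => hqP z hz (List.mem_ofFn.1 hzf))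
    (by rw [List.getElem_ofFn]; exact hux) (by rw [List.getElem_ofFn]; exact hvy.symm)
  have := hlong p hp
  rw [List.length_ofFn] at hlen
  omega

/-- On a longest `ab`-path, the successor of a neighbor of a component of `G - P`
is not a neighbor of that component. -/
theorem stmt_8 {V : Type*} [Fintype V] (G : SimpleGraph V) (a b : V) (n : ℕ)
    (f : Fin (n + 1) → V) (hinj : Function.Injective f)
    (ha : f 0 = a) (hb : f (Fin.last n) = b)
    (hadj : ∀ i : Fin n, G.Adj (f i.castSucc) (f i.succ))
    (hlong : ∀ q : G.Walk a b, q.IsPath → q.length ≤ n)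
    (H : (G.induce (Set.range f)ᶜ).ConnectedComponent)
    (i : Fin n) (hu : ∃ h ∈ Subtype.val '' H.supp, G.Adj (f i.castSucc) h) :
    ¬ ∃ h ∈ Subtype.val '' H.supp, G.Adj (f i.succ) h :=
  stmt_8_general G a b n f hinj ha hb hadj hlong H i hu
end

section
/- Let k ≥ 2 be an integer, G a (K₂ ∪ kK₁)-free graph, and X ⊆ V(G) an independent set. Then every vertex v ∈ V(G) satisfies either N_G(v) ∩ X = ∅ or |N_G(v) ∩ X| ≥ |X| − k + 1. -/
open SimpleGraph

variable {V : Type*}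

/-- In a `(K₂ ∪ kK₁)`-free graph, for an independent set `X`, every vertex has either
no neighbor in `X` or at least `|X| - k + 1` neighbors in `X`. -/
theorem stmt_9 {V : Type*} [Fintype V] (k : ℕ) (hk : 2 ≤ k) (G : SimpleGraph V)
    (hfree : IndFree (K2kK1 k) G) (X : Set V)
    (hX : X.Pairwise fun a b => ¬ G.Adj a b) (v : V) :
    G.neighborSet v ∩ X = ∅ ∨
      (X.ncard : ℤ) - k + 1 ≤ ((G.neighborSet v ∩ X).ncard : ℤ) := by
  classical
  by_contra hcon
  push_neg at hcon
  obtain ⟨hne, hlt⟩ := hcon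
  obtain ⟨u, huN, huX⟩ := hne
  have hadj : G.Adj v u := huN
  have hvX : v ∉ X := fun hv => hX hv huX hadj.ne hadj
  have hsub : X ⊆ (G.neighborSet v ∩ X) ∪ (X \ G.neighborSet v) := by
    intro x hx
    by_cases hxN : x ∈ G.neighborSet v
    · exact Or.inl ⟨hxN, hx⟩
    · exact Or.inr ⟨hx, hxN⟩
  have hcard : X.ncard ≤ (G.neighborSet v ∩ X).ncard + (X \ G.neighborSet v).ncard :=
    le_trans (Set.ncard_le_ncard hsub (Set.toFinite _)) (Set.ncard_union_le _ _)
  have hk' : k ≤ (X \ G.neighborSet v).ncard := by omega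
  obtain ⟨t, hts, htcard⟩ := Set.exists_subset_card_eq hk'
  haveI : Fintype t := (Set.toFinite t).fintype
  have hcard' : Fintype.card t = k := by
    rw [← Nat.card_eq_fintype_card, Nat.card_coe_set_eq, htcard]
  let e : t ≃ Fin k := Fintype.equivFinOfCardEq hcard'
  set w : Fin k → V := fun i => ((e.symm i : t) : V) with hw
  have hwmem : ∀ i, w i ∈ X \ G.neighborSet v := fun i => hts (e.symm i).2
  have hwX : ∀ i, w i ∈ X := fun i => (hwmem i).1
  have hwN : ∀ i, w i ∉ G.neighborSet v := fun i => (hwmem i).2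
  have hwv : ∀ i, w i ≠ v := fun i h => hvX (h ▸ hwX i)
  have hwu : ∀ i, w i ≠ u := fun i h => hwN i (h ▸ huN)
  have hwinj : Function.Injective w := fun i j h =>
    e.symm.injective (Subtype.ext h)
  let f : Fin 2 ⊕ Fin k → V := Sum.elim (fun i => if i = 0 then v else u) w
  have hvu : v ≠ u := hadj.ne
  have hinj : Function.Injective f := by
    rintro (i | i) (j | j) h <;> simp only [f, Sum.elim_inl, Sum.elim_inr] at h
    · congr 1
      fin_cases i <;> fin_cases j <;> simp_all
    · exfalso; split_ifs at h
      · exact hwv j h.symm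
      · exact hwu j h.symm
    · exfalso; split_ifs at h
      · exact hwv i h
      · exact hwu i h
    · exact congrArg Sum.inr (hwinj h)
  have hmap : ∀ a b, G.Adj (f a) (f b) ↔ (K2kK1 k).Adj a b := by
    have hnadj : ∀ i j : Fin k, ¬ G.Adj (w i) (w j) := by
      intro i j hA
      exact hX (hwX i) (hwX j) hA.ne hA
    have hnu : ∀ i : Fin k, ¬ G.Adj u (w i) := by
      intro i hA
      exact hX huX (hwX i) hA.ne hA
    have hnv : ∀ i : Fin k, ¬ G.Adj v (w i) := fun i hA => hwN i hA
    have hK : ∀ (a : Fin 2) (b : Fin k), ¬ (K2kK1 k).Adj (Sum.inl a) (Sum.inr b) := by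
      simp [K2kK1]
    have hK' : ∀ (a : Fin k) (b : Fin 2), ¬ (K2kK1 k).Adj (Sum.inr a) (Sum.inl b) := by
      simp [K2kK1]
    have hK'' : ∀ (a b : Fin k), ¬ (K2kK1 k).Adj (Sum.inr a) (Sum.inr b) := by
      simp [K2kK1]
    rintro (i | i) (j | j)
    · simp only [f, Sum.elim_inl]
      fin_cases i <;> fin_cases j <;>
        simp [K2kK1, SimpleGraph.fromRel_adj, hadj, hadj.symm, hvu, hvu.symm,
          SimpleGraph.irrefl]
    · simp only [f, Sum.elim_inl, Sum.elim_inr, hK i j, iff_false]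
      split_ifs
      · exact hnv j
      · exact hnu j
    · simp only [f, Sum.elim_inl, Sum.elim_inr, hK' i j, iff_false]
      intro hA
      split_ifs at hA
      · exact hnv i hA.symm
      · exact hnu i hA.symm
    · simp only [f, Sum.elim_inr, hK'' i j, iff_false]
      exact hnadj i j
  exact hfree.false ⟨⟨f, hinj⟩, hmap _ _⟩
end

section
/- Let k ≥ 2 be an integer, G a (K₂ ∪ kK₁)-free graph, and X ⊆ V(G) an independent set. If W ⊆ V(G) is a set of vertices each satisfying |N_G(w) ∩ X| ≤ |X| − k, then X ∪ W is an independent set in G. -/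
open SimpleGraph

variable {V : Type*}

lemma key {V : Type*} (k : ℕ) (G : SimpleGraph V)
    (hfree : IndFree (K2kK1 k) G) {a b : V} (hab : G.Adj a b)
    (T : Finset V) (hcard : T.card = k)
    (hTind : ∀ x ∈ T, ∀ y ∈ T, x ≠ y → ¬ G.Adj x y)
    (hTa : ∀ x ∈ T, ¬ G.Adj a x) (hTb : ∀ x ∈ T, ¬ G.Adj b x)
    (haT : a ∉ T) (hbT : b ∉ T) : False := by
  have e : Fin k ≃ T := (T.equivFinOfCardEq hcard).symm
  let f : Fin 2 ⊕ Fin k → V := Sum.elim (fun i => if i = 0 then a else b) (fun i => (e i : V))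
  have hne : a ≠ b := hab.ne
  have hinj : Function.Injective f := by
    rintro (i | i) (j | j) h <;> simp only [f, Sum.elim_inl, Sum.elim_inr] at h
    · congr 1
      fin_cases i <;> fin_cases j <;> simp_all
    · split at h
      · exact absurd (h ▸ (e j).2) haT
      · exact absurd (h ▸ (e j).2) hbT
    · split at h
      · exact absurd (h ▸ (e i).2) haT
      · exact absurd (h ▸ (e i).2) hbT
    · congr 1
      exact e.injective (Subtype.ext h)
  have hmap : ∀ x y, G.Adj (f x) (f y) ↔ (K2kK1 k).Adj x y := by
    rintro (i | i) (j | j) <;>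
      simp only [f, Sum.elim_inl, Sum.elim_inr, K2kK1, fromRel_adj, Sum.isLeft]
    · constructor
      · intro h
        refine ⟨?_, by simp⟩
        intro hij
        have : i = j := Sum.inl.inj hij
        subst this
        split at h <;> exact G.irrefl h
      · rintro ⟨hij, -⟩
        have : i ≠ j := fun h => hij (by rw [h])
        fin_cases i <;> fin_cases j <;> simp_all [hab, hab.symm]
    · constructor
      · intro h
        exfalso
        split at h
        · exact hTa _ (e j).2 h
        · exact hTb _ (e j).2 h
      · simp
    · constructor
      · intro h
        exfalso
        split at h
        · exact hTa _ (e i).2 h.symm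
        · exact hTb _ (e i).2 h.symm
      · simp
    · constructor
      · intro h
        exact absurd h (hTind _ (e i).2 _ (e j).2 h.ne)
      · simp
  exact hfree.false ⟨⟨f, hinj⟩, fun {x y} => hmap x y⟩

lemma subsetk {V : Type*} [Fintype V] {k : ℕ} {S : Set V} (h : k ≤ S.ncard) :
    ∃ T : Finset V, (∀ x ∈ T, x ∈ S) ∧ T.card = k := by
  classical
  have hS : S.Finite := Set.toFinite S
  rw [Set.ncard_eq_toFinset_card S hS] at h
  obtain ⟨T, hT, hc⟩ := Finset.exists_subset_card_eq h
  exact ⟨T, fun x hx => hS.mem_toFinset.mp (hT hx), hc⟩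

/-- In a `(K₂ ∪ kK₁)`-free graph, if every vertex of `W` has at most `|X| - k` neighbors
in the independent set `X`, then `X ∪ W` is independent. -/
theorem stmt_10 {V : Type*} [Fintype V] (k : ℕ) (hk : 2 ≤ k) (G : SimpleGraph V)
    (hfree : IndFree (K2kK1 k) G) (X W : Set V)
    (hX : X.Pairwise fun a b => ¬ G.Adj a b)
    (hW : ∀ w ∈ W, ((G.neighborSet w ∩ X).ncard : ℤ) ≤ (X.ncard : ℤ) - k) :
    (X ∪ W).Pairwise fun a b => ¬ G.Adj a b := by
  classical
  have hXfin : X.Finite := Set.toFinite X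
  have hcardX : ∀ w ∈ W, k ≤ X.ncard := by
    intro w hw
    have := hW w hw
    have h0 : (0 : ℤ) ≤ ((G.neighborSet w ∩ X).ncard : ℤ) := Int.ofNat_nonneg _
    omega
  -- L1 : no W-X adjacency
  have L1 : ∀ w ∈ W, ∀ u ∈ X, ¬ G.Adj w u := by
    intro w hw u hu hadj
    by_cases hwX : w ∈ X
    · exact hX hwX hu hadj.ne hadj
    · set S := X \ G.neighborSet w with hSdef
      have hsplit : (G.neighborSet w ∩ X).ncard + S.ncard = X.ncard := by
        rw [Set.inter_comm]
        exact Set.ncard_inter_add_ncard_diff_eq_ncard X (G.neighborSet w) hXfin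
      have hkS : k ≤ S.ncard := by
        have := hW w hw; omega
      obtain ⟨T, hTS, hTcard⟩ := subsetk hkS
      refine key k G hfree hadj T hTcard ?_ ?_ ?_ ?_ ?_
      · intro x hx y hy hxy
        exact hX (hTS x hx).1 (hTS y hy).1 hxy
      · intro x hx
        exact (hTS x hx).2
      · intro x hx
        have hxX := (hTS x hx).1
        have hxu : x ≠ u := by
          intro h; exact (hTS x hx).2 (h ▸ hadj)
        exact fun h => hX hu hxX hxu.symm h
      · intro h; exact hwX (hTS w h).1
      · intro h; exact (hTS u h).2 hadj
  intro a ha b hb hne hadj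
  rcases ha with haX | haW
  · rcases hb with hbX | hbW
    · exact hX haX hbX hne hadj
    · exact L1 b hbW a haX hadj.symm
  · rcases hb with hbX | hbW
    · exact L1 a haW b hbX hadj
    · by_cases haX : a ∈ X
      · exact L1 b hbW a haX hadj.symm
      · by_cases hbX : b ∈ X
        · exact L1 a haW b hbX hadj
        · obtain ⟨T, hTS, hTcard⟩ := subsetk (hcardX a haW)
          refine key k G hfree hadj T hTcard ?_ ?_ ?_ ?_ ?_
          · intro x hx y hy hxy
            exact hX (hTS x hx) (hTS y hy) hxy
          · intro x hx
            exact L1 a haW x (hTS x hx)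
          · intro x hx
            exact L1 b hbW x (hTS x hx)
          · intro h; exact haX (hTS a h)
          · intro h; exact hbX (hTS b h)
end

section
/- Every hamiltonian-connected graph on at least four vertices has toughness strictly larger than 1; that is, for every vertex cut S with ω(G−S) ≥ 2 we have ω(G−S) < |S|. -/
open SimpleGraph

variable {V : Type*}

/-!
If `u ≠ v` lie in `S`, a hamiltonian `uv`-path visits every component of `G - S`, and since it
ends in `S` it steps out of each visited component into a vertex of `S` other than `u`, a different
one each time; so `ω(G - S) ≤ |S| - 1`. If `|S| ≤ 1`, a path meets `S` at most once, so it falls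
apart into at most two pieces of `G - S`. Hence for `a, b` in different components of `G - S` and a
third vertex `c ∉ S`, the hamiltonian `ab`-path puts `c` in the component of `a` or of `b`, say of
`a`, and then the hamiltonian `ac`-path puts `b` in that same component: `G - S` is connected.
-/

namespace SimpleGraph.Walk

variable {G : SimpleGraph V}

def visitedComponents (S : Finset V) {x y : V} (p : G.Walk x y) :
    Set (G.induce (S : Set V)ᶜ).ConnectedComponent :=
  (G.induce (S : Set V)ᶜ).connectedComponentMk '' {v | ↑v ∈ p.support}

theorem visitedComponents_finite (S : Finset V) {x y : V} (p : G.Walk x y) :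
    (p.visitedComponents S).Finite :=
  ((List.finite_toSet p.support).preimage Subtype.val_injective.injOn).image _

theorem visitedComponents_nil_of_mem {S : Finset V} {y : V} (hy : y ∈ S) :
    (nil : G.Walk y y).visitedComponents S = ∅ := by
  have hout : ∀ v : ↥(S : Set V)ᶜ, ↑v ≠ y := fun v h => v.2 (by simpa [h] using hy)
  simp [visitedComponents, hout]

theorem visitedComponents_cons_subset_insert {S : Finset V} {x x' y : V} (hadj : G.Adj x x')
    (q : G.Walk x' y) (hx : x ∉ S) :
    (cons hadj q).visitedComponents S ⊆
      insert ((G.induce (S : Set V)ᶜ).connectedComponentMk ⟨x, hx⟩) (q.visitedComponents S) := by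
  rintro _ ⟨v, hv, rfl⟩
  rcases List.mem_cons.mp hv with h | h
  · exact Or.inl (congrArg _ (Subtype.ext h))
  · exact Or.inr ⟨v, h, rfl⟩

theorem visitedComponents_cons_subset {S : Finset V} {x x' y : V} (hadj : G.Adj x x')
    (q : G.Walk x' y) (hx' : x ∉ S → x' ∉ S) :
    (cons hadj q).visitedComponents S ⊆ q.visitedComponents S := by
  rintro _ ⟨v, hv, rfl⟩
  rcases List.mem_cons.mp hv with h | h
  · have hx : x ∉ S := by simpa [h] using v.2
    refine ⟨⟨x', hx' hx⟩, q.start_mem_support, ConnectedComponent.sound ?_⟩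
    exact Adj.reachable (by simpa [h] using hadj.symm)
  · exact ⟨v, h, rfl⟩

variable [DecidableEq V]

/-- The right-hand side counts the steps of `p` that land in `S`; a walk ending in `S` leaves
each component it visits by such a step. -/
theorem ncard_visitedComponents_le {S : Finset V} {x y : V} (p : G.Walk x y) (hy : y ∈ S) :
    (p.visitedComponents S).ncard ≤ p.support.tail.countP (· ∈ S) := by
  induction p with
  | nil => simp [visitedComponents_nil_of_mem hy]
  | @cons x x' y hadj q ih =>
    have hcount : q.support.countP (· ∈ S) =
        q.support.tail.countP (· ∈ S) + if x' ∈ S then 1 else 0 := by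
      rw [← q.cons_tail_support, List.countP_cons, List.tail_cons]
      simp
    rw [support_cons, List.tail_cons, hcount]
    by_cases hexit : x ∉ S ∧ x' ∈ S
    · rw [if_pos hexit.2]
      calc _ ≤ _ := Set.ncard_le_ncard (visitedComponents_cons_subset_insert hadj q hexit.1)
            ((q.visitedComponents_finite S).insert _)
        _ ≤ _ := Set.ncard_insert_le _ _
        _ ≤ _ := Nat.add_le_add_right (ih hy) 1
    · calc _ ≤ _ := Set.ncard_le_ncard
            (visitedComponents_cons_subset hadj q fun hx hx' => hexit ⟨hx, hx'⟩)
            (q.visitedComponents_finite S)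
        _ ≤ _ := ih hy
        _ ≤ _ := Nat.le_add_right _ _

theorem IsHamiltonian.omegaDel_lt_card [Fintype V] {S : Finset V} {u v : V} {p : G.Walk u v}
    (hp : p.IsHamiltonian) (hu : u ∈ S) (hv : v ∈ S) : omegaDel G S < S.card := by
  have hall : p.visitedComponents S = Set.univ := by
    have hsupp : {w : ↥(S : Set V)ᶜ | ↑w ∈ p.support} = Set.univ :=
      Set.eq_univ_of_forall fun w => hp.mem_support w
    rw [visitedComponents, hsupp, Set.image_univ_of_surjective fun C => C.exists_rep]
  have hnodup := hp.isPath.support_nodup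
  rw [← cons_tail_support, List.nodup_cons] at hnodup
  have hcount : p.support.tail.countP (· ∈ S) ≤ (S.erase u).card := by
    rw [List.countP_eq_length_filter, ← List.toFinset_card_of_nodup (hnodup.2.filter _)]
    refine Finset.card_le_card fun s hs => ?_
    simp only [List.mem_toFinset, List.mem_filter, decide_eq_true_eq] at hs
    exact Finset.mem_erase.mpr ⟨fun h => hnodup.1 (h ▸ hs.1), hs.2⟩
  calc omegaDel G S = (p.visitedComponents S).ncard := by rw [hall, Set.ncard_univ]; rfl
    _ ≤ p.support.tail.countP (· ∈ S) := p.ncard_visitedComponents_le hv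
    _ ≤ (S.erase u).card := hcount
    _ < S.card := Finset.card_erase_lt_of_mem hu

theorem IsPath.exists_walk_avoiding_of_subsingleton {s : Set V} (hs : s.Subsingleton)
    {x y w : V} {p : G.Walk x y} (hp : p.IsPath) (hw : w ∈ p.support) (hws : w ∉ s) :
    (∃ q : G.Walk x w, ∀ v ∈ q.support, v ∈ sᶜ) ∨ ∃ q : G.Walk w y, ∀ v ∈ q.support, v ∈ sᶜ := by
  induction p with
  | nil =>
    rw [support_nil, List.mem_singleton] at hw
    subst hw
    exact Or.inl ⟨Walk.nil, by simpa using hws⟩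
  | @cons x x' y hadj q ih =>
    rw [cons_isPath_iff] at hp
    rw [support_cons, List.mem_cons] at hw
    rcases hw with rfl | hw
    · exact Or.inl ⟨Walk.nil, by simpa using hws⟩
    rcases ih hp.1 hw with ⟨r, hr⟩ | hright
    · by_cases hx : x ∈ s
      · refine Or.inr ⟨q.dropUntil w hw, fun v hv hvs => hp.2 ?_⟩
        exact hs hx hvs ▸ q.support_dropUntil_subset_support hw hv
      · exact Or.inl ⟨r.cons hadj, by simpa [hx] using hr⟩
    · exact Or.inr hright

end SimpleGraph.Walk

namespace HamConn

variable [DecidableEq V] {G : SimpleGraph V} {s : Set V}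

theorem reachable_or_reachable (hG : HamConn G) (hs : s.Subsingleton) {x y : ↥sᶜ} (hxy : x ≠ y)
    (w : ↥sᶜ) : (G.induce sᶜ).Reachable x w ∨ (G.induce sᶜ).Reachable y w := by
  obtain ⟨p, hp⟩ := hG x y (Subtype.coe_injective.ne hxy)
  rcases hp.isPath.exists_walk_avoiding_of_subsingleton hs (hp.mem_support w) w.2 with
    ⟨q, hq⟩ | ⟨q, hq⟩
  · exact Or.inl ⟨q.induce sᶜ hq⟩
  · exact Or.inr ⟨(q.induce sᶜ hq).reverse⟩

theorem preconnected_induce_compl (hG : HamConn G) (hs : s.Subsingleton) (hcard : 2 < sᶜ.ncard) :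
    (G.induce sᶜ).Preconnected := by
  intro a b
  by_contra hab
  have hne : a ≠ b := by rintro rfl; exact hab (Reachable.refl _)
  have hlt : ({(a : V), (b : V)} : Set V).ncard < sᶜ.ncard := by
    rwa [Set.ncard_pair (Subtype.coe_injective.ne hne)]
  obtain ⟨c, hc, hcab⟩ := Set.exists_mem_notMem_of_ncard_lt_ncard hlt
  simp only [Set.mem_insert_iff, Set.mem_singleton_iff, not_or] at hcab
  have hca : (⟨c, hc⟩ : ↥sᶜ) ≠ a := fun h => hcab.1 (congrArg Subtype.val h)
  have hcb : (⟨c, hc⟩ : ↥sᶜ) ≠ b := fun h => hcab.2 (congrArg Subtype.val h)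
  rcases hG.reachable_or_reachable hs hne ⟨c, hc⟩ with hac | hbc
  · rcases hG.reachable_or_reachable hs hca.symm b with hab' | hcb'
    · exact hab hab'
    · exact hab (hac.trans hcb')
  · rcases hG.reachable_or_reachable hs hcb.symm a with hba | hca'
    · exact hab hba.symm
    · exact hab (hbc.trans hca').symm

end HamConn

/-- Every hamiltonian-connected graph on at least four vertices has toughness larger
than 1. -/
theorem stmt_16 {V : Type*} [Fintype V] [DecidableEq V] (G : SimpleGraph V)
    (hcard : 4 ≤ Fintype.card V) (hhc : HamConn G) :
    ∀ S : Finset V, 2 ≤ omegaDel G S → omegaDel G S < S.card := by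
  intro S hS
  by_cases hsmall : S.card ≤ 1
  · have hsub : (S : Set V).Subsingleton := fun a ha b hb => Finset.card_le_one.mp hsmall a ha b hb
    have hconn := hhc.preconnected_induce_compl hsub <| by
      rw [Set.ncard_compl, Set.ncard_coe_finset, Nat.card_eq_fintype_card]
      omega
    have : omegaDel G S ≤ 1 :=
      Finite.card_le_one_iff_subsingleton.mpr hconn.subsingleton_connectedComponent
    omega
  · obtain ⟨u, hu, v, hv, huv⟩ := Finset.one_lt_card.mp (by omega : 1 < S.card)
    obtain ⟨p, hp⟩ := hhc u v huv
    exact hp.omegaDel_lt_card hu hv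
end

section
/- Let G be a graph that is not hamiltonian, C a longest cycle of G with an orientation, x a vertex not on C all of whose neighbors lie on C, with neighbors x_1, …, x_d on C. Then the set X = {x} ∪ {x_1⁺, …, x_d⁺} (successors on C of the neighbors of x) is an independent set of size d + 1. -/
open SimpleGraph

variable {V : Type*}

/-! If `x` were adjacent to two consecutive vertices `f i`, `f (i + 1)` of `C`, or if
`x ∼ f i`, `x ∼ f j` and `f (i + 1) ∼ f (j + 1)`, then `C` could be rerouted through `x` into a
cycle with `n + 1` vertices. The count holds because `i ↦ f (i + 1)` is injective and all
neighbours of `x` lie on `C`. -/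

namespace SimpleGraph.Walk

variable {V : Type*} {G : SimpleGraph V}

theorem IsPath.isCycle_cons_concat {u v x : V} {p : G.Walk u v} (hp : p.IsPath) (huv : u ≠ v)
    (hxp : x ∉ p.support) (hxu : G.Adj x u) (hvx : G.Adj v x) :
    (cons hxu (p.concat hvx)).IsCycle := by
  refine (cons_isCycle_iff _ hxu).mpr ⟨hp.concat hxp hvx, ?_⟩
  rw [edges_concat, List.concat_eq_append, List.mem_append, List.mem_singleton, Sym2.eq_iff]
  rintro (he | ⟨rfl, -⟩ | ⟨-, rfl⟩)
  · exact hxp (fst_mem_support_of_mem_edges p he)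
  · exact hxp p.end_mem_support
  · exact huv rfl

theorem IsPath.length_add_two_le {n : ℕ}
    (hlong : ∀ (w : V) (c : G.Walk w w), c.IsCycle → c.length ≤ n)
    {u v x : V} {p : G.Walk u v} (hp : p.IsPath) (huv : u ≠ v) (hxp : x ∉ p.support)
    (hxu : G.Adj x u) (hxv : G.Adj x v) : p.length + 2 ≤ n := by
  have := hlong x _ (hp.isCycle_cons_concat huv hxp hxu hxv.symm)
  simp only [length_cons, length_concat] at this
  omega

end SimpleGraph.Walk

section CycleArc

variable {V : Type*} {G : SimpleGraph V} {n : ℕ} {f : ZMod n → V}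

def arcWalk (hadj : ∀ i : ZMod n, G.Adj (f i) (f (i + 1))) :
    ∀ (k : ℕ) (a : ZMod n), G.Walk (f a) (f (a + k))
  | 0, a => Walk.nil.copy rfl (congrArg f (by push_cast; ring))
  | k + 1, a => (Walk.cons (hadj a) (arcWalk hadj k (a + 1))).copy rfl
      (congrArg f (by push_cast; ring))

variable (hadj : ∀ i : ZMod n, G.Adj (f i) (f (i + 1)))

theorem length_arcWalk : ∀ (k : ℕ) (a : ZMod n), (arcWalk hadj k a).length = k
  | 0, a => by simp [arcWalk]
  | k + 1, a => by simp [arcWalk, length_arcWalk k]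

theorem support_arcWalk : ∀ (k : ℕ) (a : ZMod n),
    (arcWalk hadj k a).support = (List.range (k + 1)).map fun t : ℕ => f (a + t)
  | 0, a => by simp [arcWalk]
  | k + 1, a => by
      rw [List.range_succ_eq_map]
      simp only [arcWalk, Walk.support_copy, Walk.support_cons, support_arcWalk k (a + 1),
        List.map_cons, List.map_map, Nat.cast_zero, add_zero]
      refine congrArg _ (List.map_congr_left fun t _ => congrArg f ?_)
      push_cast
      ring

theorem support_arcWalk_add (k m : ℕ) {a b : ZMod n} (hab : a + (k + 1 : ℕ) = b) :
    (arcWalk hadj (k + 1 + m) a).support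
      = (arcWalk hadj k a).support ++ (arcWalk hadj m b).support := by
  subst hab
  rw [support_arcWalk, support_arcWalk, support_arcWalk,
    show k + 1 + m + 1 = (k + 1) + (m + 1) by omega, List.range_add, List.map_append, List.map_map]
  refine congrArg _ (List.map_congr_left fun t _ => congrArg f ?_)
  push_cast
  ring

theorem notMem_support_arcWalk {x : V} (hx : x ∉ Set.range f) (k : ℕ) (a : ZMod n) :
    x ∉ (arcWalk hadj k a).support := by
  simp only [support_arcWalk, List.mem_map, not_exists, not_and]
  exact fun t _ ht => hx ⟨_, ht⟩

theorem isPath_arcWalk (hinj : Function.Injective f) {k : ℕ} (hk : k < n) (a : ZMod n) :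
    (arcWalk hadj k a).IsPath := by
  refine Walk.IsPath.mk' ?_
  rw [support_arcWalk]
  refine List.nodup_range.map_on fun s hs t ht hst => ?_
  rw [List.mem_range] at hs ht
  have hcast : (s : ZMod n) = t := add_left_cancel (hinj hst)
  simpa [ZMod.val_cast_of_lt (by omega : s < n), ZMod.val_cast_of_lt (by omega : t < n)]
    using congrArg ZMod.val hcast

end CycleArc

section LongestCycle

variable {V : Type*} {G : SimpleGraph V} {n : ℕ} {f : ZMod n → V} {x : V}

theorem not_adj_succ_of_adj (hn : 1 < n) (hinj : Function.Injective f)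
    (hadj : ∀ i : ZMod n, G.Adj (f i) (f (i + 1)))
    (hlong : ∀ (v : V) (c : G.Walk v v), c.IsCycle → c.length ≤ n) (hx : x ∉ Set.range f)
    {i : ZMod n} (hxi : G.Adj x (f i)) : ¬ G.Adj x (f (i + 1)) := by
  intro hxi'
  have : Fact (1 < n) := ⟨hn⟩
  have hend : i + 1 + ((n - 1 : ℕ) : ZMod n) = i := by
    rw [Nat.cast_sub hn.le, ZMod.natCast_self]
    ring
  let P : G.Walk (f (i + 1)) (f i) := (arcWalk hadj (n - 1) (i + 1)).copy rfl (congrArg f hend)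
  have hP : P.IsPath := by simpa [P] using isPath_arcWalk hadj hinj (by omega) (i + 1)
  have hne : f (i + 1) ≠ f i := fun h => one_ne_zero (add_eq_left.mp (hinj h))
  have hxP : x ∉ P.support := by simpa [P] using notMem_support_arcWalk hadj hx (n - 1) (i + 1)
  have := hP.length_add_two_le hlong hne hxP hxi' hxi
  simp only [P, Walk.length_copy, length_arcWalk] at this
  omega

/-- If `f (i + 1) ∼ f (j + 1)`, the walk from `f i` back along `C` to `f (j + 1)`, across to
`f (i + 1)` and forward along `C` to `f j` visits every vertex of `C` once. -/
theorem not_adj_succ_succ_of_adj (hn : 1 < n) (hinj : Function.Injective f)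
    (hadj : ∀ i : ZMod n, G.Adj (f i) (f (i + 1)))
    (hlong : ∀ (v : V) (c : G.Walk v v), c.IsCycle → c.length ≤ n) (hx : x ∉ Set.range f)
    {i j : ZMod n} (hij : i ≠ j) (hxi : G.Adj x (f i))
    (hxj : G.Adj x (f j)) : ¬ G.Adj (f (i + 1)) (f (j + 1)) := by
  intro hcross
  have : NeZero n := ⟨by omega⟩
  set a := (i - j).val with ha
  have ha1 : 1 ≤ a := Nat.one_le_iff_ne_zero.mpr fun h =>
    hij (sub_eq_zero.mp ((ZMod.val_eq_zero _).mp h))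
  have han : a < n := ZMod.val_lt _
  have hcast : (a : ZMod n) = i - j := by rw [ha, ZMod.natCast_val, ZMod.cast_id]
  have hA : j + 1 + ((a - 1 : ℕ) : ZMod n) = i := by
    rw [Nat.cast_sub ha1, hcast]
    ring
  have hB : i + 1 + ((n - a - 1 : ℕ) : ZMod n) = j := by
    rw [show n - a - 1 = n - (a + 1) by omega, Nat.cast_sub (by omega), ZMod.natCast_self]
    push_cast [hcast]
    ring
  have hAB : j + 1 + ((a - 1 + 1 : ℕ) : ZMod n) = i + 1 := by
    rw [Nat.cast_add, ← add_assoc, hA, Nat.cast_one]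
  let A : G.Walk (f (j + 1)) (f i) := (arcWalk hadj (a - 1) (j + 1)).copy rfl (congrArg f hA)
  let B : G.Walk (f (i + 1)) (f j) := (arcWalk hadj (n - a - 1) (i + 1)).copy rfl (congrArg f hB)
  let P : G.Walk (f i) (f j) := A.reverse.append (Walk.cons hcross.symm B)
  have hperm : P.support.Perm (arcWalk hadj (a - 1 + 1 + (n - a - 1)) (j + 1)).support := by
    rw [support_arcWalk_add hadj _ _ hAB]
    simpa [P, A, B, Walk.support_append] using (List.reverse_perm _).append_right _
  have hP : P.IsPath := Walk.IsPath.mk' <| hperm.nodup_iff.mpr <|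
    (isPath_arcWalk hadj hinj (by omega) (j + 1)).support_nodup
  have hxP : x ∉ P.support := fun h =>
    notMem_support_arcWalk hadj hx _ _ (hperm.subset h)
  have := hP.length_add_two_le hlong (hinj.ne hij) hxP hxi hxj
  simp only [P, A, B, Walk.length_append, Walk.length_reverse, Walk.length_cons,
    Walk.length_copy, length_arcWalk] at this
  omega

end LongestCycle

theorem stmt_18_general {V : Type*} (G : SimpleGraph V)
    (n : ℕ) (hn : 3 ≤ n)
    (f : ZMod n → V) (hinj : Function.Injective f)
    (hadj : ∀ i : ZMod n, G.Adj (f i) (f (i + 1)))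
    (hlong : ∀ (v : V) (c : G.Walk v v), c.IsCycle → c.length ≤ n)
    (x : V) (hx : x ∉ Set.range f) (hNx : G.neighborSet x ⊆ Set.range f)
    (d : ℕ) (hd : (G.neighborSet x).ncard = d) :
    (({x} ∪ {w | ∃ i : ZMod n, G.Adj x (f i) ∧ w = f (i + 1)} : Set V).Pairwise
      fun a b => ¬ G.Adj a b) ∧
    ({x} ∪ {w | ∃ i : ZMod n, G.Adj x (f i) ∧ w = f (i + 1)} : Set V).ncard = d + 1 := by
  have : NeZero n := ⟨by omega⟩
  have hn1 : 1 < n := by omega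
  have hS : {w | ∃ i : ZMod n, G.Adj x (f i) ∧ w = f (i + 1)}
      = (fun i => f (i + 1)) '' (f ⁻¹' G.neighborSet x) := by
    ext w
    simp [eq_comm]
  rw [hS]
  constructor
  · rintro u (rfl | ⟨i, hxi, rfl⟩) v (rfl | ⟨j, hxj, rfl⟩) huv
    · exact absurd rfl huv
    · exact not_adj_succ_of_adj hn1 hinj hadj hlong hx hxj
    · exact fun h => not_adj_succ_of_adj hn1 hinj hadj hlong hx hxi h.symm
    · exact not_adj_succ_succ_of_adj hn1 hinj hadj hlong hx (by rintro rfl; exact huv rfl) hxi hxj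
  · have hxS : x ∉ (fun i => f (i + 1)) '' (f ⁻¹' G.neighborSet x) :=
      fun ⟨i, _, h⟩ => hx ⟨i + 1, h⟩
    rw [Set.singleton_union, Set.ncard_insert_of_notMem hxS (Set.toFinite _),
      Set.ncard_image_of_injective (f := fun i => f (i + 1)) _ (hinj.comp (add_left_injective 1)),
      Set.ncard_preimage_of_injective_subset_range hinj hNx, hd]

/-- For a vertex `x` off a longest cycle `C` of a non-hamiltonian graph with all
neighbors on `C`, the set `{x}` together with the successors of the neighbors of `x`
is an independent set of size `d + 1`. -/
theorem stmt_18 {V : Type*} [Fintype V] [DecidableEq V] (G : SimpleGraph V)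
    (hnh : ¬ Ham G) (n : ℕ) (hn : 3 ≤ n)
    (f : ZMod n → V) (hinj : Function.Injective f)
    (hadj : ∀ i : ZMod n, G.Adj (f i) (f (i + 1)))
    (hlong : ∀ (v : V) (c : G.Walk v v), c.IsCycle → c.length ≤ n)
    (x : V) (hx : x ∉ Set.range f) (hNx : G.neighborSet x ⊆ Set.range f)
    (d : ℕ) (hd : (G.neighborSet x).ncard = d) :
    (({x} ∪ {w | ∃ i : ZMod n, G.Adj x (f i) ∧ w = f (i + 1)} : Set V).Pairwise
      fun a b => ¬ G.Adj a b) ∧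
    ({x} ∪ {w | ∃ i : ZMod n, G.Adj x (f i) ∧ w = f (i + 1)} : Set V).ncard = d + 1 :=
  stmt_18_general G n hn f hinj hadj hlong x hx hNx d hd
end

section
/- Let G be a graph, C a longest cycle of G with a fixed orientation, x a vertex off C with N_G(x) ⊆ V(C), and let x_i, x_j be distinct neighbors of x on C. Suppose uv is an edge of the arc of C from x_j⁺ to x_i (following the orientation) with v = u⁺. If u x_i⁺ ∈ E(G), then v x_j⁺ ∉ E(G). -/
open SimpleGraph

variable {V : Type*}

/-!
Walking `C` backwards from `xⱼ` to `xᵢ⁺`, jumping to `u`, walking backwards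
to `xⱼ⁺`, jumping to `v` and walking forwards to `xᵢ` visits every vertex of `C` exactly once, so
closing this path through `x` yields a cycle longer than `C`.
-/

theorem SimpleGraph.exists_isCycle_length_of_isChain {V : Type*} {G : SimpleGraph V} {l : List V}
    (hl : 3 ≤ l.length) (hnodup : l.Nodup) (hchain : l.IsChain G.Adj)
    (hclose : ∀ u ∈ l.getLast?, ∀ v ∈ l.head?, G.Adj u v) :
    ∃ (v : V) (c : G.Walk v v), c.IsCycle ∧ c.length = l.length := by
  have hne : l ≠ [] := List.ne_nil_of_length_pos (by omega)
  let p := Walk.ofSupport l hne hchain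
  have hp : p.IsPath := Walk.isPath_def _ |>.mpr (by simpa [p] using hnodup)
  have hadj : G.Adj (l.getLast hne) (l.head hne) :=
    hclose _ (List.getLast?_eq_some_getLast hne) _ (List.head?_eq_some_head hne)
  refine ⟨_, .cons hadj p, (Walk.cons_isCycle_iff p hadj).mpr ⟨hp, fun he => ?_⟩, ?_⟩
  · have := hp.length_eq_one_of_mem_edges (Sym2.eq_swap ▸ he)
    simp only [Walk.length_ofSupport, p] at this
    omega
  · simp only [Walk.length_cons, Walk.length_ofSupport, p]
    omega

/-- Counting offsets along `C` from `xⱼ⁺`, with `a` the offset of `xᵢ` and `s` that of `u`, the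
path described above visits the offsets in the order `n - 1, …, a + 1, s, …, 0, s + 1, …, a`. -/
def reroute (n a s : ℕ) : List ℕ :=
  (List.range' (a + 1) (n - 1 - a)).reverse ++ (List.range (s + 1)).reverse ++
    List.range' (s + 1) (a - s)

theorem reroute_perm {n a s : ℕ} (hs : s < a) (ha : a < n) :
    (reroute n a s).Perm (List.range n) := by
  have h1 : List.range (s + 1) ++ List.range' (s + 1) (a - s) = List.range' 0 (a + 1) := by
    have := List.range'_append_1 (s := 0) (m := s + 1) (n := a - s)
    rw [zero_add] at this
    rw [List.range_eq_range', this]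
    congr 1
    omega
  have h2 : List.range' 0 (a + 1) ++ List.range' (a + 1) (n - 1 - a) = List.range n := by
    have := List.range'_append_1 (s := 0) (m := a + 1) (n := n - 1 - a)
    rw [zero_add] at this
    rw [List.range_eq_range', this]
    congr 1
    omega
  unfold reroute
  rw [← h2, ← h1, List.append_assoc]
  refine (((List.reverse_perm _).append ((List.reverse_perm _).append_right _))).trans ?_
  exact List.perm_append_comm

theorem reroute_head? {n a s : ℕ} (ha : a + 1 < n) : (reroute n a s).head? = some (n - 1) := by
  simp only [reroute, List.append_assoc, List.head?_append, List.head?_reverse,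
    List.getLast?_range', show n - 1 - a ≠ 0 by omega, ↓reduceIte, Nat.succ_add_sub_one,
    Option.some_or, Option.some.injEq]
  omega

theorem reroute_getLast? {n a s : ℕ} (hs : s < a) : (reroute n a s).getLast? = some a := by
  simp only [reroute, List.append_assoc, List.getLast?_append, List.getLast?_range',
    show a - s ≠ 0 by omega, ↓reduceIte, Nat.succ_add_sub_one, List.getLast?_reverse,
    Option.some_or, Option.some.injEq]
  omega

theorem isChain_reroute {R : ℕ → ℕ → Prop} (hup : ∀ t, R t (t + 1)) (hdown : ∀ t, R (t + 1) t)
    {n a s : ℕ} (ha : a + 1 < n) (hs : s < a) (hjump₁ : R (a + 1) s) (hjump₂ : R 0 (s + 1)) :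
    (reroute n a s).IsChain R := by
  have hfwd : ∀ b k, (List.range' b k).IsChain R := fun b k =>
    (List.isChain_range' b k 1).imp fun t y (h : y = t + 1) => h ▸ hup t
  have hbwd : ∀ b k, (List.range' b k).reverse.IsChain R := fun b k =>
    List.isChain_reverse.mpr <|
      (List.isChain_range' b k 1).imp fun t y (h : y = t + 1) => h ▸ hdown t
  obtain ⟨k, hk⟩ : ∃ k, n - 1 - a = k + 1 := ⟨n - 2 - a, by omega⟩
  obtain ⟨m, hm⟩ : ∃ m, a - s = m + 1 := ⟨a - s - 1, by omega⟩
  unfold reroute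
  rw [List.range_eq_range']
  simp [List.isChain_append, hfwd, hbwd, hk, hm, List.head?_range', List.getLast?_range', hjump₁,
    hjump₂]

theorem exists_isCycle_length_of_reroute {V : Type*} {G : SimpleGraph V} {c : ℕ → V} {n a s : ℕ}
    (hc : Set.InjOn c (Set.Iio n)) (hstep : ∀ t, G.Adj (c t) (c (t + 1))) (ha : a + 1 < n)
    (hs : s < a) (hjump₁ : G.Adj (c s) (c (a + 1))) (hjump₂ : G.Adj (c (s + 1)) (c 0))
    {x : V} (hx : ∀ t < n, c t ≠ x) (hxa : G.Adj x (c a)) (hxn : G.Adj x (c (n - 1))) :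
    ∃ (v : V) (C : G.Walk v v), C.IsCycle ∧ C.length = n + 1 := by
  have hperm := reroute_perm (n := n) hs (by omega)
  have hlt : ∀ t ∈ reroute n a s, t < n := fun t ht => by simpa using hperm.subset ht
  set l := x :: (reroute n a s).map c
  have hlen : l.length = n + 1 := by simp [l, hperm.length_eq]
  have hnodup : l.Nodup := by
    refine List.nodup_cons.mpr ⟨fun hmem => ?_, ?_⟩
    · obtain ⟨t, ht, hct⟩ := List.mem_map.mp hmem
      exact hx t (hlt t ht) hct
    · exact (hperm.nodup_iff.mpr List.nodup_range).map_on fun t ht t' ht' =>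
        hc (hlt t ht) (hlt t' ht')
  have hchain : l.IsChain G.Adj := by
    refine List.IsChain.cons ?_ ?_
    · exact (List.isChain_map c).mpr <| isChain_reroute hstep (fun t => (hstep t).symm) ha hs
        hjump₁.symm hjump₂.symm
    · simp [reroute_head? ha, hxn]
  have hclose : ∀ u ∈ l.getLast?, ∀ w ∈ l.head?, G.Adj u w := by
    simp [l, List.getLast?_cons, reroute_getLast? hs, hxa.symm]
  rw [← hlen]
  exact exists_isCycle_length_of_isChain (by omega) hnodup hchain hclose

theorem ZMod.val_sub_sub_one_add_one_lt {n : ℕ} [NeZero n] {i j : ZMod n} (hij : i ≠ j) :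
    (i - j - 1).val + 1 < n := by
  have hcast : (((i - j - 1).val + 1 : ℕ) : ZMod n) = i - j := by simp
  have hne : (i - j - 1).val + 1 ≠ n := fun h =>
    sub_ne_zero.mpr hij (by rw [← hcast, h, ZMod.natCast_self])
  have := ZMod.val_lt (i - j - 1)
  omega

theorem stmt_19_general {V : Type*} (G : SimpleGraph V) (n : ℕ) (hn : 3 ≤ n)
    (f : ZMod n → V) (hinj : Function.Injective f)
    (hadj : ∀ i : ZMod n, G.Adj (f i) (f (i + 1)))
    (hlong : ∀ (v : V) (c : G.Walk v v), c.IsCycle → c.length ≤ n)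
    (x : V) (hx : x ∉ Set.range f)
    (i j : ZMod n) (hij : i ≠ j) (hxi : G.Adj x (f i)) (hxj : G.Adj x (f j))
    (s : ℕ) (hs : s < (i - j - 1 : ZMod n).val)
    (hu : G.Adj (f (j + 1 + (s : ZMod n))) (f (i + 1))) :
    ¬ G.Adj (f (j + 1 + (s : ZMod n) + 1)) (f (j + 1)) := by
  intro hv
  have : NeZero n := ⟨by omega⟩
  set c : ℕ → V := fun t => f (j + 1 + t)
  have hcinj : Set.InjOn c (Set.Iio n) := fun t ht t' ht' h => by
    have := (ZMod.natCast_eq_natCast_iff' t t' n).mp (add_left_cancel (hinj h))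
    rwa [Nat.mod_eq_of_lt ht, Nat.mod_eq_of_lt ht'] at this
  have hstep (t : ℕ) : G.Adj (c t) (c (t + 1)) := by
    simpa [c, add_assoc] using hadj (j + 1 + t)
  have hjump₁ : G.Adj (c s) (c ((i - j - 1).val + 1)) := by
    convert hu using 2
    simp only [Nat.cast_succ, ZMod.natCast_zmod_val]
    ring
  have hjump₂ : G.Adj (c (s + 1)) (c 0) := by
    convert hv using 2 <;> push_cast <;> ring
  have hxa : G.Adj x (c (i - j - 1).val) := by simpa [c] using hxi
  have hxn : G.Adj x (c (n - 1)) := by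
    convert hxj using 2
    rw [Nat.cast_sub (by omega), ZMod.natCast_self]
    ring
  obtain ⟨v, C, hC, hlen⟩ := exists_isCycle_length_of_reroute hcinj hstep
    (ZMod.val_sub_sub_one_add_one_lt hij) hs hjump₁ hjump₂
    (fun t _ hct => hx ⟨_, hct⟩) hxa hxn
  have := hlong v C hC
  omega

/-- On a longest cycle `C` with `x` off `C`, for distinct neighbors `xᵢ = f i` and
`xⱼ = f j` of `x`, if `uv` is an edge of the arc from `xⱼ⁺` to `xᵢ` (with `v = u⁺`) and
`u xᵢ⁺ ∈ E(G)`, then `v xⱼ⁺ ∉ E(G)`. -/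
theorem stmt_19 {V : Type*} [Fintype V] (G : SimpleGraph V) (n : ℕ) (hn : 3 ≤ n)
    (f : ZMod n → V) (hinj : Function.Injective f)
    (hadj : ∀ i : ZMod n, G.Adj (f i) (f (i + 1)))
    (hlong : ∀ (v : V) (c : G.Walk v v), c.IsCycle → c.length ≤ n)
    (x : V) (hx : x ∉ Set.range f) (hNx : G.neighborSet x ⊆ Set.range f)
    (i j : ZMod n) (hij : i ≠ j) (hxi : G.Adj x (f i)) (hxj : G.Adj x (f j))
    (s : ℕ) (hs : s < (i - j - 1 : ZMod n).val)
    (hu : G.Adj (f (j + 1 + (s : ZMod n))) (f (i + 1))) :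
    ¬ G.Adj (f (j + 1 + (s : ZMod n) + 1)) (f (j + 1)) :=
  stmt_19_general G n hn f hinj hadj hlong x hx i j hij hxi hxj s hs hu
end
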